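/- arXiv:hep-th/0610318 — 12 statements merged into one kernel-verified Lean document; each statement's English description precedes it below -/
import Mathlib

section
/- Let L be a finite-dimensional real Lie algebra and suppose its complexification ℂ ⊗[ℝ] L (with its canonical structure of complex Lie algebra obtained by base change) admits a symmetric ℂ-bilinear form B that is invariant (B(⁅x,y⁆, z) = B(x, ⁅y,z⁆) for all x, y, z) and non-degenerate. Then L admits a symmetric, invariant, non-degenerate ℝ-bilinear form; i.e. every real form of a quasi-classical complex Lie algebra is quasi-classical. -/
/-!
If `G = P + i Q` is the (invertible) Gram matrix of `B` in a real basis of `L`, then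
`t ↦ det (P + t Q)` is a real polynomial whose value at `t = i` is `det G ≠ 0`, so it does not
vanish at some real `t`. The form `Re B + t Im B` restricted to `L ⊆ ℂ ⊗ L` has Gram matrix
`P + t Q`, hence is non-degenerate, and it inherits symmetry and invariance from `B`.
-/

open TensorProduct Polynomial

theorem Matrix.exists_det_map_re_add_mul_im_ne_zero {n : Type*} [Fintype n] [DecidableEq n]
    {A : Matrix n n ℂ} (hA : A.det ≠ 0) :
    ∃ t : ℝ, (A.map fun z => z.re + t * z.im).det ≠ 0 := by
  set Q : Matrix n n ℝ[X] := A.map fun z => C z.re + X * C z.im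
  have hQ_I : aeval Complex.I Q.det = A.det := by
    rw [AlgHom.map_det]
    congr 1
    ext i j
    simp [Q]
  have hQ : Q.det ≠ 0 := fun h => hA (by rw [← hQ_I, h, map_zero])
  obtain ⟨t, ht⟩ : ∃ t, Q.det.eval t ≠ 0 := by
    by_contra! h
    exact hQ (zero_of_eval_zero _ h)
  refine ⟨t, ?_⟩
  rw [← coe_evalRingHom, RingHom.map_det] at ht
  convert ht using 2
  ext i j
  simp [Q, mul_comm t]

namespace LinearMap

section BaseChange

variable {R A M : Type*} [CommRing R] [CommRing A] [Algebra R A] [AddCommGroup M] [Module R M]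

def restrictBaseChange (B : A ⊗[R] M →ₗ[A] A ⊗[R] M →ₗ[A] A) (φ : A →ₗ[R] R) :
    M →ₗ[R] M →ₗ[R] R :=
  let ι : M →ₗ[R] A ⊗[R] M := TensorProduct.mk R A M 1
  ((B.restrictScalars₁₂ R R).compl₁₂ ι ι).compr₂ φ

@[simp]
theorem restrictBaseChange_apply (B : A ⊗[R] M →ₗ[A] A ⊗[R] M →ₗ[A] A) (φ : A →ₗ[R] R)
    (x y : M) : restrictBaseChange B φ x y = φ (B (1 ⊗ₜ x) (1 ⊗ₜ y)) :=
  rfl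

theorem restrictBaseChange_comm {B : A ⊗[R] M →ₗ[A] A ⊗[R] M →ₗ[A] A}
    (hB : ∀ x y, B x y = B y x) (φ : A →ₗ[R] R) (x y : M) :
    restrictBaseChange B φ x y = restrictBaseChange B φ y x := by
  rw [restrictBaseChange_apply, hB, restrictBaseChange_apply]

theorem restrictBaseChange_lie_assoc {L : Type*} [LieRing L] [LieAlgebra R L]
    {B : A ⊗[R] L →ₗ[A] A ⊗[R] L →ₗ[A] A} (hB : ∀ x y z, B ⁅x, y⁆ z = B x ⁅y, z⁆)
    (φ : A →ₗ[R] R) (x y z : L) :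
    restrictBaseChange B φ ⁅x, y⁆ z = restrictBaseChange B φ x ⁅y, z⁆ := by
  have tmul_lie (u v : L) : (1 : A) ⊗ₜ[R] ⁅u, v⁆ = ⁅(1 : A) ⊗ₜ[R] u, (1 : A) ⊗ₜ[R] v⁆ := by
    rw [LieAlgebra.ExtendScalars.bracket_tmul, one_mul]
  simp only [restrictBaseChange_apply, tmul_lie, hB]

theorem toMatrix₂_restrictBaseChange {ι : Type*} [Fintype ι] [DecidableEq ι]
    (B : A ⊗[R] M →ₗ[A] A ⊗[R] M →ₗ[A] A) (φ : A →ₗ[R] R) (b : Module.Basis ι R M) :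
    toMatrix₂ b b (restrictBaseChange B φ) =
      (toMatrix₂ (b.baseChange A) (b.baseChange A) B).map φ := by
  ext i j
  simp [toMatrix₂_apply, Module.Basis.baseChange_apply]

end BaseChange

theorem exists_separatingLeft_restrictBaseChange_re_add_smul_im {M : Type*} [AddCommGroup M]
    [Module ℝ M] [FiniteDimensional ℝ M] {B : ℂ ⊗[ℝ] M →ₗ[ℂ] ℂ ⊗[ℝ] M →ₗ[ℂ] ℂ}
    (hB : B.SeparatingLeft) :
    ∃ t : ℝ, (restrictBaseChange B (Complex.reLm + t • Complex.imLm)).SeparatingLeft := by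
  classical
  let b := Module.finBasis ℝ M
  rw [separatingLeft_iff_det_ne_zero (b.baseChange ℂ)] at hB
  obtain ⟨t, ht⟩ := Matrix.exists_det_map_re_add_mul_im_ne_zero hB
  refine ⟨t, (separatingLeft_iff_det_ne_zero b).mpr ?_⟩
  rwa [toMatrix₂_restrictBaseChange]

end LinearMap

/-- If the complexification `ℂ ⊗[ℝ] L` of a finite-dimensional real Lie algebra
`L` admits a symmetric, invariant, non-degenerate ℂ-bilinear form, then `L` admits a symmetric,
invariant, non-degenerate ℝ-bilinear form: every real form of a quasi-classical complex Lie
algebra is quasi-classical. -/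
theorem realForm_of_quasiClassical_complexification
    (L : Type*) [LieRing L] [LieAlgebra ℝ L] [FiniteDimensional ℝ L]
    (B : (ℂ ⊗[ℝ] L) →ₗ[ℂ] (ℂ ⊗[ℝ] L) →ₗ[ℂ] ℂ)
    (hsymm : ∀ x y, B x y = B y x)
    (hinv : ∀ x y z, B ⁅x, y⁆ z = B x ⁅y, z⁆)
    (hnondeg : ∀ x, (∀ y, B x y = 0) → x = 0) :
    ∃ B' : L →ₗ[ℝ] L →ₗ[ℝ] ℝ,
      (∀ x y, B' x y = B' y x) ∧
      (∀ x y z, B' ⁅x, y⁆ z = B' x ⁅y, z⁆) ∧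
      (∀ x, (∀ y, B' x y = 0) → x = 0) := by
  obtain ⟨t, ht⟩ :=
    LinearMap.exists_separatingLeft_restrictBaseChange_re_add_smul_im (B := B) hnondeg
  exact ⟨LinearMap.restrictBaseChange B _, LinearMap.restrictBaseChange_comm hsymm _,
    LinearMap.restrictBaseChange_lie_assoc hinv _, ht⟩
end

section
/- Let L₁ and L₂ be finite-dimensional real Lie algebras and let B be a symmetric, invariant, non-degenerate bilinear form on the product Lie algebra L = L₁ × L₂. Assume that the restriction of B to the centre Z(L) of L is degenerate, i.e. there exists a nonzero z ∈ Z(L) with B(z,w) = 0 for all w ∈ Z(L). Then both L₁ and L₂ are quasi-classical, i.e. each admits a symmetric, invariant, non-degenerate bilinear form. -/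
/-!
Only the first factor needs an argument; the second follows by swapping the factors. Let `B₀` be
the restriction of `B` to `L₁`. Its radical `R` meets `[L₁, L₁]` trivially: for `x ∈ [L₁, L₁]`,
invariance gives `B(x, L₂) = 0`, so `B(x, L₁) = 0` forces `x = 0`. Choose a complement `S` of `R`
containing `[L₁, L₁]`, let `π` be the projection onto `R` along `S`, and add to `B₀` the pullback
along `π` of any nondegenerate symmetric form on `R`. Since `π` kills brackets, the correction
term is invariant, and being nondegenerate on `R` it removes the radical of `B₀`.
-/

section ProdLie

variable (L M : Type*) [LieRing L] [LieRing M]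

/-- The product of two Lie rings, with componentwise bracket. -/
instance Prod.instLieRing : LieRing (L × M) where
  bracket p q := (⁅p.1, q.1⁆, ⁅p.2, q.2⁆)
  add_lie x y z := by
    show (⁅(x+y).1, z.1⁆, ⁅(x+y).2, z.2⁆) = (⁅x.1,z.1⁆, ⁅x.2,z.2⁆) + (⁅y.1,z.1⁆, ⁅y.2,z.2⁆)
    simp only [Prod.fst_add, Prod.snd_add, Prod.mk_add_mk, Prod.mk.injEq]
    exact ⟨add_lie .., add_lie ..⟩
  lie_add x y z := by
    show (⁅x.1, (y+z).1⁆, ⁅x.2, (y+z).2⁆) = (⁅x.1,y.1⁆, ⁅x.2,y.2⁆) + (⁅x.1,z.1⁆, ⁅x.2,z.2⁆)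
    simp only [Prod.fst_add, Prod.snd_add, Prod.mk_add_mk, Prod.mk.injEq]
    exact ⟨lie_add .., lie_add ..⟩
  lie_self x := by
    show (⁅x.1, x.1⁆, ⁅x.2, x.2⁆) = (0 : L × M)
    simp
  leibniz_lie x y z := by
    show (⁅x.1, ⁅y.1,z.1⁆⁆, ⁅x.2, ⁅y.2,z.2⁆⁆)
      = (⁅⁅x.1,y.1⁆, z.1⁆, ⁅⁅x.2,y.2⁆, z.2⁆) + (⁅y.1, ⁅x.1,z.1⁆⁆, ⁅y.2, ⁅x.2,z.2⁆⁆)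
    simp only [Prod.mk_add_mk, Prod.mk.injEq]
    exact ⟨leibniz_lie .., leibniz_lie ..⟩

variable (R : Type*) [CommRing R] [LieAlgebra R L] [LieAlgebra R M]

/-- The product of two Lie algebras, with componentwise bracket. -/
instance Prod.instLieAlgebra : LieAlgebra R (L × M) where
  lie_smul t x y := by
    show (⁅x.1, (t • y).1⁆, ⁅x.2, (t • y).2⁆) = t • (⁅x.1,y.1⁆, ⁅x.2,y.2⁆)
    simp

@[simp] theorem Prod.bracket_def (p q : L × M) : ⁅p, q⁆ = (⁅p.1, q.1⁆, ⁅p.2, q.2⁆) := rfl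

end ProdLie

open LinearMap Submodule

theorem Module.exists_symm_nondegenerate_bilin (K V : Type*) [Field K] [AddCommGroup V]
    [Module K V] :
    ∃ g : V →ₗ[K] V →ₗ[K] K, (∀ x y, g x y = g y x) ∧ ∀ x, (∀ y, g x y = 0) → x = 0 := by
  classical
  let b := Module.Basis.ofVectorSpace K V
  refine ⟨b.toDual, fun x y => ?_, fun x hx => b.toDual_injective ?_⟩
  · have : b.toDual x = b.toDual.flip x := b.ext fun i => by
      rw [flip_apply, b.toDual_apply_left, b.toDual_apply_right]
    exact congr($this y)
  · ext y
    simp [hx]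

namespace LieAlgebra

variable {K L L' : Type*} [Field K] [LieRing L] [LieAlgebra K L] [LieRing L']
  [LieAlgebra K L']

def IsQuasiClassical (K L : Type*) [CommRing K] [LieRing L] [LieAlgebra K L] : Prop :=
  ∃ B : L →ₗ[K] L →ₗ[K] K, (∀ x y, B x y = B y x) ∧ (∀ x y z, B ⁅x, y⁆ z = B x ⁅y, z⁆) ∧
    ∀ x, (∀ y, B x y = 0) → x = 0

theorem isQuasiClassical_of_disjoint_ker_commutator (B : L →ₗ[K] L →ₗ[K] K)
    (hsymm : ∀ x y, B x y = B y x) (hinv : ∀ x y z, B ⁅x, y⁆ z = B x ⁅y, z⁆)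
    (hdisj : Disjoint (ker B) ⁅(⊤ : LieIdeal K L), (⊤ : LieIdeal K L)⁆.toSubmodule) :
    IsQuasiClassical K L := by
  obtain ⟨S, hDS, hS⟩ := hdisj.symm.exists_isCompl
  obtain ⟨g, hg_symm, hg_nondeg⟩ := Module.exists_symm_nondegenerate_bilin K (ker B)
  set π := (ker B).projectionOnto S hS.symm
  have hπ_lie (x y : L) : π ⁅x, y⁆ = 0 := projectionOnto_apply_of_mem_right _
    (hDS (LieSubmodule.lie_mem_lie (LieSubmodule.mem_top x) (LieSubmodule.mem_top y)))
  refine ⟨B + g.compl₁₂ π π, fun x y => ?_, fun x y z => ?_, fun x hx => ?_⟩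
  · simp [hsymm x, hg_symm (π x)]
  · simp [hinv, hπ_lie]
  · have hBx : B x = 0 := by
      ext y
      obtain ⟨s, hs, r, hr, rfl⟩ := mem_sup.mp (hS.sup_eq_top ▸ mem_top : y ∈ S ⊔ ker B)
      have hπs : π s = 0 := projectionOnto_apply_of_mem_right _ hs
      have hBr : B r x = 0 := by rw [mem_ker.mp hr, LinearMap.zero_apply]
      simpa [hsymm x r, hBr, hπs] using hx s
    have hxR : x ∈ ker B := hBx
    have hπx : π x = 0 := hg_nondeg _ fun r => by
      obtain ⟨y, rfl⟩ := projectionOnto_surjective hS.symm r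
      simpa [hBx] using hx y
    simpa [π, projectionOnto_apply_of_mem_left _ hxR] using hπx

theorem toSubmodule_top_lie_top_le_ker {M : Type*} [AddCommGroup M] [Module K M]
    (f : L →ₗ[K] M) (hf : ∀ a b : L, f ⁅a, b⁆ = 0) :
    (⁅(⊤ : LieIdeal K L), (⊤ : LieIdeal K L)⁆).toSubmodule ≤ ker f := by
  rw [LieSubmodule.lieIdeal_oper_eq_linear_span', span_le]
  rintro _ ⟨a, -, b, -, rfl⟩
  exact hf a b

theorem IsQuasiClassical.fst (h : IsQuasiClassical K (L × L')) : IsQuasiClassical K L := by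
  obtain ⟨B, hsymm, hinv, hnondeg⟩ := h
  have hinl_lie (a b : L) : inl K L L' ⁅a, b⁆ = ⁅inl K L L' a, inl K L L' b⁆ := by simp
  refine isQuasiClassical_of_disjoint_ker_commutator (B.compl₁₂ (inl K L L') (inl K L L'))
    (fun x y => hsymm _ _) (fun x y z => by simp only [compl₁₂_apply, hinl_lie, hinv]) ?_
  rw [disjoint_def]
  intro x hx hx_comm
  have hcross (w : L') : B (x, 0) (0, w) = 0 := by
    refine toSubmodule_top_lie_top_le_ker ((B.flip (0, w)).comp (inl K L L')) (fun a b => ?_)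
      hx_comm
    have hb : ⁅inl K L L' b, ((0 : L), w)⁆ = 0 := Prod.ext (lie_zero b) (zero_lie w)
    rw [comp_apply, flip_apply, hinl_lie, hinv, hb, map_zero]
  have : ((x, 0) : L × L') = 0 := hnondeg _ fun w => by
    have hB₁ : B (x, 0) (w.1, 0) = 0 := congr($(mem_ker.mp hx) w.1)
    rw [← Prod.fst_add_snd w, map_add, hB₁, hcross, add_zero]
  exact congr($this.1)

theorem IsQuasiClassical.of_lieEquiv (e : L ≃ₗ⁅K⁆ L') (h : IsQuasiClassical K L) :
    IsQuasiClassical K L' := by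
  obtain ⟨B, hsymm, hinv, hnondeg⟩ := h
  let f : L' →ₗ[K] L := e.symm
  refine ⟨B.compl₁₂ f f, fun x y => hsymm _ _, fun x y z => ?_, fun x hx => ?_⟩
  · simp only [compl₁₂_apply, f, LinearEquiv.coe_coe, LieEquiv.coe_toLinearEquiv,
      LieEquiv.map_lie, hinv]
  · have : e.symm x = 0 := hnondeg _ fun y => by simpa [f] using hx (e y)
    simpa using congr(e $this)

theorem IsQuasiClassical.snd (h : IsQuasiClassical K (L × L')) : IsQuasiClassical K L' :=
  (h.of_lieEquiv (LieEquiv.prodComm K L L')).fst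

end LieAlgebra

theorem factors_quasiClassical_of_degenerate_on_centre_general
    (L₁ L₂ : Type*) [LieRing L₁] [LieAlgebra ℝ L₁]
    [LieRing L₂] [LieAlgebra ℝ L₂]
    (B : (L₁ × L₂) →ₗ[ℝ] (L₁ × L₂) →ₗ[ℝ] ℝ)
    (hsymm : ∀ x y, B x y = B y x)
    (hinv : ∀ x y z, B ⁅x, y⁆ z = B x ⁅y, z⁆)
    (hnondeg : ∀ x, (∀ y, B x y = 0) → x = 0) :
    (∃ B₁ : L₁ →ₗ[ℝ] L₁ →ₗ[ℝ] ℝ,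
      (∀ x y, B₁ x y = B₁ y x) ∧
      (∀ x y z, B₁ ⁅x, y⁆ z = B₁ x ⁅y, z⁆) ∧
      (∀ x, (∀ y, B₁ x y = 0) → x = 0)) ∧
    (∃ B₂ : L₂ →ₗ[ℝ] L₂ →ₗ[ℝ] ℝ,
      (∀ x y, B₂ x y = B₂ y x) ∧
      (∀ x y z, B₂ ⁅x, y⁆ z = B₂ x ⁅y, z⁆) ∧
      (∀ x, (∀ y, B₂ x y = 0) → x = 0)) :=
  have h : LieAlgebra.IsQuasiClassical ℝ (L₁ × L₂) := ⟨B, hsymm, hinv, hnondeg⟩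
  ⟨h.fst, h.snd⟩

/-- If the product Lie algebra `L = L₁ × L₂` carries a symmetric, invariant,
non-degenerate bilinear form `B` whose restriction to the centre `Z(L)` is degenerate, then
both `L₁` and `L₂` are quasi-classical. -/
theorem factors_quasiClassical_of_degenerate_on_centre
    (L₁ L₂ : Type*) [LieRing L₁] [LieAlgebra ℝ L₁] [FiniteDimensional ℝ L₁]
    [LieRing L₂] [LieAlgebra ℝ L₂] [FiniteDimensional ℝ L₂]
    (B : (L₁ × L₂) →ₗ[ℝ] (L₁ × L₂) →ₗ[ℝ] ℝ)
    (hsymm : ∀ x y, B x y = B y x)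
    (hinv : ∀ x y z, B ⁅x, y⁆ z = B x ⁅y, z⁆)
    (hnondeg : ∀ x, (∀ y, B x y = 0) → x = 0)
    (hdeg : ∃ z ∈ LieAlgebra.center ℝ (L₁ × L₂), z ≠ 0 ∧
      ∀ w ∈ LieAlgebra.center ℝ (L₁ × L₂), B z w = 0) :
    (∃ B₁ : L₁ →ₗ[ℝ] L₁ →ₗ[ℝ] ℝ,
      (∀ x y, B₁ x y = B₁ y x) ∧
      (∀ x y z, B₁ ⁅x, y⁆ z = B₁ x ⁅y, z⁆) ∧
      (∀ x, (∀ y, B₁ x y = 0) → x = 0)) ∧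
    (∃ B₂ : L₂ →ₗ[ℝ] L₂ →ₗ[ℝ] ℝ,
      (∀ x y, B₂ x y = B₂ y x) ∧
      (∀ x y z, B₂ ⁅x, y⁆ z = B₂ x ⁅y, z⁆) ∧
      (∀ x, (∀ y, B₂ x y = 0) → x = 0)) :=
  factors_quasiClassical_of_degenerate_on_centre_general L₁ L₂ B hsymm hinv hnondeg
end

section
/- Let L be a finite-dimensional real Lie algebra, s ⊆ L a semisimple Lie subalgebra and I ⊆ L an abelian Lie ideal such that L = s ⊕ I as vector spaces and ⁅L, I⁆ = I. If L admits a symmetric, invariant, non-degenerate bilinear form (L is quasi-classical), then dim I ≤ dim s; equivalently, 2·dim I ≤ dim L. -/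
/-!
By invariance `B y ⁅a, n⁆ = -B a ⁅y, n⁆ = 0` for `a ∈ L` and `n, y ∈ I`, as `I` is abelian.
As `I = ⁅L, I⁆`, the ideal `I` is totally isotropic, and an isotropic subspace of a
non-degenerate form has at most half the dimension of the space. Since `s` is a complement of
`I`, `dim s = dim L - dim I ≥ dim I`.
-/

open Module

namespace LieIdeal

variable {R L : Type*} [CommRing R] [LieRing L] [LieAlgebra R L]

theorem lie_top_le_orthogonal_of_isLieAbelian {B : LinearMap.BilinForm R L}
    (hB : ∀ x y z, B ⁅x, y⁆ z = B x ⁅y, z⁆) (I : LieIdeal R L) [IsLieAbelian I] :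
    (⁅(⊤ : LieIdeal R L), I⁆ : LieSubmodule R L L).toSubmodule ≤
      B.orthogonal (I : LieSubmodule R L L).toSubmodule := by
  rw [LieSubmodule.lieIdeal_oper_eq_linear_span', Submodule.span_le]
  rintro _ ⟨a, -, n, hn, rfl⟩ y hy
  have hyn : ⁅y, n⁆ = 0 := congrArg Subtype.val (trivial_lie_zero I I ⟨y, hy⟩ ⟨n, hn⟩)
  change B y ⁅a, n⁆ = 0
  rw [← hB, ← lie_skew, map_neg, LinearMap.neg_apply, hB, hyn, map_zero, neg_zero]

end LieIdeal

theorem LinearMap.BilinForm.Nondegenerate.two_mul_finrank_le_of_le_orthogonal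
    {K V : Type*} [Field K] [AddCommGroup V] [Module K V] [FiniteDimensional K V]
    {B : LinearMap.BilinForm K V} (hB : B.Nondegenerate) {W : Submodule K V}
    (hW : W ≤ B.orthogonal W) :
    2 * finrank K W ≤ finrank K V := by
  have hle := Submodule.finrank_mono hW
  rw [LinearMap.BilinForm.finrank_orthogonal hB] at hle
  have := Submodule.finrank_le W
  omega

theorem dim_abelian_radical_le_of_quasiClassical_general
    (L : Type*) [LieRing L] [LieAlgebra ℝ L] [FiniteDimensional ℝ L]
    (s : LieSubalgebra ℝ L)
    (I : LieIdeal ℝ L) [IsLieAbelian I]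
    (hdisj : s.toSubmodule ⊓ (I : LieSubmodule ℝ L L).toSubmodule = ⊥)
    (hspan : s.toSubmodule ⊔ (I : LieSubmodule ℝ L L).toSubmodule = ⊤)
    (hLI : ⁅(⊤ : LieIdeal ℝ L), I⁆ = I)
    (hqc : ∃ B : L →ₗ[ℝ] L →ₗ[ℝ] ℝ,
      (∀ x y, B x y = B y x) ∧
      (∀ x y z, B ⁅x, y⁆ z = B x ⁅y, z⁆) ∧
      (∀ x, (∀ y, B x y = 0) → x = 0)) :
    Module.finrank ℝ I ≤ Module.finrank ℝ s ∧
      2 * Module.finrank ℝ I ≤ Module.finrank ℝ L := by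
  obtain ⟨B, hsym, hinv, hsep⟩ := hqc
  have hrefl : B.IsRefl := fun x y h => by rwa [hsym]
  have hnondeg : LinearMap.BilinForm.Nondegenerate B :=
    hrefl.nondegenerate_iff_separatingLeft.mpr hsep
  have hiso : (I : LieSubmodule ℝ L L).toSubmodule ≤
      LinearMap.BilinForm.orthogonal B (I : LieSubmodule ℝ L L).toSubmodule := by
    simpa only [hLI] using LieIdeal.lie_top_le_orthogonal_of_isLieAbelian hinv I
  have hhalf := hnondeg.two_mul_finrank_le_of_le_orthogonal hiso
  have hcompl := Submodule.finrank_add_eq_of_isCompl (IsCompl.of_eq hdisj hspan)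
  change finrank ℝ (I : LieSubmodule ℝ L L).toSubmodule ≤ finrank ℝ s.toSubmodule ∧
    2 * finrank ℝ (I : LieSubmodule ℝ L L).toSubmodule ≤ finrank ℝ L
  omega

/-- Let `L` be a finite-dimensional real Lie algebra, `s ⊆ L` a semisimple
Lie subalgebra and `I ⊆ L` an abelian Lie ideal with `L = s ⊕ I` as vector spaces and
`⁅L, I⁆ = I`.  If `L` is quasi-classical (admits a symmetric, invariant, non-degenerate
bilinear form), then `dim I ≤ dim s`; equivalently `2 * dim I ≤ dim L`. -/
theorem dim_abelian_radical_le_of_quasiClassical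
    (L : Type*) [LieRing L] [LieAlgebra ℝ L] [FiniteDimensional ℝ L]
    (s : LieSubalgebra ℝ L) [LieAlgebra.IsSemisimple ℝ s]
    (I : LieIdeal ℝ L) [IsLieAbelian I]
    (hdisj : s.toSubmodule ⊓ (I : LieSubmodule ℝ L L).toSubmodule = ⊥)
    (hspan : s.toSubmodule ⊔ (I : LieSubmodule ℝ L L).toSubmodule = ⊤)
    (hLI : ⁅(⊤ : LieIdeal ℝ L), I⁆ = I)
    (hqc : ∃ B : L →ₗ[ℝ] L →ₗ[ℝ] ℝ,
      (∀ x y, B x y = B y x) ∧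
      (∀ x y z, B ⁅x, y⁆ z = B x ⁅y, z⁆) ∧
      (∀ x, (∀ y, B x y = 0) → x = 0)) :
    Module.finrank ℝ I ≤ Module.finrank ℝ s ∧
      2 * Module.finrank ℝ I ≤ Module.finrank ℝ L :=
  dim_abelian_radical_le_of_quasiClassical_general L s I hdisj hspan hLI hqc
end

section
/- Let L be a nilpotent real Lie algebra of finite dimension n with n ≥ 3, and suppose L admits a symmetric, invariant, non-degenerate bilinear form. Then the nilpotency index of L is at most n − 2; that is, the (n−2)-th term of the lower central series of L vanishes, where the lower central series is defined by C⁰L = L and C^{k+1}L = ⁅L, C^kL⁆. -/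
/-!
If `C^{n-2} L ≠ 0`, nilpotency makes the lower central series strictly decrease up to step `n - 2`,
and `[L, L]` has codimension at least two, so `dim C^{n-2} L ≤ 1`. Invariance and non-degeneracy of
`B` put the left orthogonal of `C^k L` inside the `k`-th term `Z_k` of the upper central series, so
`Z_{n-2}` has codimension at most one. Since `⁅x, x⁆ = 0`, a normalizer of codimension at most one
is everything; hence `Z_{n-2} = L`, i.e. `C^{n-2} L = 0`.
-/

open LieModule Module

theorem lowerCentralSeries_eq_bot_of_succ_eq {R L M : Type*} [CommRing R] [LieRing L]
    [LieAlgebra R L] [AddCommGroup M] [Module R M] [LieRingModule L M] [LieModule R L M]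
    [IsNilpotent L M] {k : ℕ}
    (h : lowerCentralSeries R L M (k + 1) = lowerCentralSeries R L M k) :
    lowerCentralSeries R L M k = ⊥ := by
  obtain ⟨m, hm⟩ := IsNilpotent.nilpotent R L M
  have hfix : ∀ j, lowerCentralSeries R L M (k + j) = lowerCentralSeries R L M k := by
    intro j
    induction j with
    | zero => rfl
    | succ j ih => rw [← add_assoc, lowerCentralSeries_succ, ih, ← lowerCentralSeries_succ, h]
  rw [eq_bot_iff, ← hm, ← hfix m]
  exact antitone_lowerCentralSeries R L M (Nat.le_add_left m k)

theorem orthogonal_flip_lowerCentralSeries_le_ucs {R L : Type*} [CommRing R] [LieRing L]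
    [LieAlgebra R L] {B : LinearMap.BilinForm R L} (hinv : ∀ x y z, B ⁅x, y⁆ z = B x ⁅y, z⁆)
    (hB : B.SeparatingLeft) (k : ℕ) :
    B.flip.orthogonal (lowerCentralSeries R L L k).toSubmodule
      ≤ ((⊥ : LieIdeal R L).ucs k).toSubmodule := by
  induction k with
  | zero =>
    intro x hx
    exact (hB x fun y => LinearMap.BilinForm.mem_orthogonal_iff.1 hx y (by simp)) ▸ zero_mem _
  | succ k ih =>
    intro x hx
    rw [LieSubmodule.ucs_succ, LieSubmodule.mem_toSubmodule, LieSubmodule.mem_normalizer]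
    intro y
    refine ih (LinearMap.BilinForm.mem_orthogonal_iff.2 fun c hc => ?_)
    have hyc : ⁅y, c⁆ ∈ lowerCentralSeries R L L (k + 1) := by
      rw [lowerCentralSeries_succ]
      exact LieSubmodule.lie_mem_lie (LieSubmodule.mem_top y) hc
    have hxyc : B x ⁅y, c⁆ = 0 := LinearMap.BilinForm.mem_orthogonal_iff.1 hx _ hyc
    rw [LinearMap.BilinForm.flip_apply, ← lie_skew, map_neg, LinearMap.neg_apply, hinv, hxyc,
      neg_zero]

section FiniteDimensional

variable {K L : Type*} [Field K] [LieRing L] [LieAlgebra K L] [FiniteDimensional K L]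

theorem normalizer_eq_top_of_finrank_le_succ {I J : LieIdeal K L} (hIJ : I ≤ J.normalizer)
    (hI : finrank K L ≤ finrank K I + 1) : J.normalizer = ⊤ := by
  by_contra hN
  obtain ⟨x, -, hx⟩ := SetLike.exists_of_lt (Ne.lt_top hN)
  set N : Submodule K L := J.normalizer.toSubmodule
  have hspan : N ⊔ K ∙ x = ⊤ := by
    apply Submodule.eq_top_of_finrank_eq
    have hlt := Submodule.finrank_lt_finrank_of_lt (show N < N ⊔ K ∙ x from
      Submodule.lt_sup_iff_notMem.2 hx)
    have hIN : finrank K I ≤ finrank K N := Submodule.finrank_mono (show I.toSubmodule ≤ N from hIJ)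
    have hle := Submodule.finrank_le (N ⊔ K ∙ x)
    omega
  refine hx ((LieSubmodule.mem_normalizer J x).2 fun a => ?_)
  obtain ⟨z, hz, _, hy, rfl⟩ := Submodule.mem_sup.1 (hspan ▸ Submodule.mem_top : a ∈ N ⊔ K ∙ x)
  obtain ⟨r, rfl⟩ := Submodule.mem_span_singleton.1 hy
  rw [add_lie, smul_lie, lie_self, smul_zero, add_zero, ← lie_skew]
  exact neg_mem ((LieSubmodule.mem_normalizer J z).1 hz x)

theorem lowerCentralSeries_one_eq_bot_of_finrank_le_succ [LieRing.IsNilpotent L]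
    (h : finrank K L ≤ finrank K (lowerCentralSeries K L L 1) + 1) :
    lowerCentralSeries K L L 1 = ⊥ := by
  have hle : lowerCentralSeries K L L 1 ≤ (lowerCentralSeries K L L 2).normalizer :=
    (LieSubmodule.top_lie_le_iff_le_normalizer _ _).1 (lowerCentralSeries_succ K L L 1).ge
  have htop := normalizer_eq_top_of_finrank_le_succ hle h
  refine lowerCentralSeries_eq_bot_of_succ_eq
    (le_antisymm (antitone_lowerCentralSeries K L L (Nat.le_succ 1)) ?_)
  rw [lowerCentralSeries_succ, lowerCentralSeries_zero,
    LieSubmodule.top_lie_le_iff_le_normalizer, htop]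

theorem finrank_lowerCentralSeries_add_le [LieRing.IsNilpotent L] {k : ℕ} (hk : 1 ≤ k)
    (h : lowerCentralSeries K L L k ≠ ⊥) :
    finrank K (lowerCentralSeries K L L k) + k + 1 ≤ finrank K L := by
  induction k, hk using Nat.le_induction with
  | base =>
    by_contra! hcodim
    exact h (lowerCentralSeries_one_eq_bot_of_finrank_le_succ (by omega))
  | succ k hk ih =>
    have hanti := antitone_lowerCentralSeries K L L (Nat.le_succ k)
    have hk_ne : lowerCentralSeries K L L k ≠ ⊥ := fun h' => h (eq_bot_iff.2 (h' ▸ hanti))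
    have hlt : (lowerCentralSeries K L L (k + 1) : Submodule K L) < lowerCentralSeries K L L k :=
      lt_of_le_of_ne hanti fun he =>
        hk_ne (lowerCentralSeries_eq_bot_of_succ_eq ((LieSubmodule.toSubmodule_inj _ _).1 he))
    have hdim : finrank K (lowerCentralSeries K L L (k + 1))
        < finrank K (lowerCentralSeries K L L k) :=
      Submodule.finrank_lt_finrank_of_lt hlt
    have := ih hk_ne
    omega

theorem finrank_le_finrank_ucs_add_finrank_lowerCentralSeries {B : LinearMap.BilinForm K L}
    (hinv : ∀ x y z, B ⁅x, y⁆ z = B x ⁅y, z⁆) (hB : B.SeparatingLeft) (k : ℕ) :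
    finrank K L ≤
      finrank K ((⊥ : LieIdeal K L).ucs k) + finrank K (lowerCentralSeries K L L k) := by
  set C := lowerCentralSeries K L L k
  set Z := (⊥ : LieIdeal K L).ucs k
  calc finrank K L ≤ finrank K L + finrank K ↥(C.toSubmodule ⊓ LinearMap.ker B.flip) := le_self_add
    _ = finrank K C + finrank K (B.flip.orthogonal C.toSubmodule) :=
      (B.flip.finrank_add_finrank_orthogonal' _).symm
    _ ≤ finrank K C + finrank K Z :=
      Nat.add_le_add_left
        (Submodule.finrank_mono (orthogonal_flip_lowerCentralSeries_le_ucs hinv hB k)) _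
    _ = finrank K Z + finrank K C := add_comm _ _

end FiniteDimensional

theorem nilindex_le_of_quasiClassical_general
    (L : Type*) [LieRing L] [LieAlgebra ℝ L] [FiniteDimensional ℝ L]
    [LieRing.IsNilpotent L]
    (hn : 3 ≤ Module.finrank ℝ L)
    (B : L →ₗ[ℝ] L →ₗ[ℝ] ℝ)
    (hinv : ∀ x y z, B ⁅x, y⁆ z = B x ⁅y, z⁆)
    (hnondeg : ∀ x, (∀ y, B x y = 0) → x = 0) :
    LieModule.lowerCentralSeries ℝ L L (Module.finrank ℝ L - 2) = ⊥ := by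
  obtain ⟨m, hm⟩ : ∃ m, finrank ℝ L - 2 = m + 1 := ⟨finrank ℝ L - 3, by omega⟩
  rw [hm]
  by_contra hC
  have hdimC := finrank_lowerCentralSeries_add_le (Nat.le_add_left 1 m) hC
  have hdimZ := finrank_le_finrank_ucs_add_finrank_lowerCentralSeries hinv hnondeg (m + 1)
  rw [LieSubmodule.ucs_succ] at hdimZ
  have hZ : ((⊥ : LieIdeal ℝ L).ucs m).normalizer = ⊤ :=
    normalizer_eq_top_of_finrank_le_succ le_rfl (by omega)
  rw [← LieSubmodule.ucs_succ, LieSubmodule.ucs_eq_top_iff] at hZ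
  exact hC (le_bot_iff.1 hZ)

/-- A nilpotent real Lie algebra `L` of finite dimension `n ≥ 3` admitting a
symmetric, invariant, non-degenerate bilinear form has nilpotency index at most `n - 2`: the
`(n-2)`-th term of its lower central series (with `C⁰L = L`, `C^{k+1}L = ⁅L, C^kL⁆`) vanishes. -/
theorem nilindex_le_of_quasiClassical
    (L : Type*) [LieRing L] [LieAlgebra ℝ L] [FiniteDimensional ℝ L]
    [LieRing.IsNilpotent L]
    (hn : 3 ≤ Module.finrank ℝ L)
    (B : L →ₗ[ℝ] L →ₗ[ℝ] ℝ)
    (hsymm : ∀ x y, B x y = B y x)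
    (hinv : ∀ x y z, B ⁅x, y⁆ z = B x ⁅y, z⁆)
    (hnondeg : ∀ x, (∀ y, B x y = 0) → x = 0) :
    LieModule.lowerCentralSeries ℝ L L (Module.finrank ℝ L - 2) = ⊥ :=
  nilindex_le_of_quasiClassical_general L hn B hinv hnondeg
end

section
/- Let ι be a finite type, M a natural number, and A a square matrix indexed by ι whose entries are real polynomials A i j ∈ ℝ[X], each of degree at most M. If for every real number t the evaluated real matrix (fun i j => (A i j).eval t) has determinant zero, then the real matrix whose (i,j) entry is the coefficient of X^M in A i j also has determinant zero. -/
open Polynomial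

/-- Let `A` be a square matrix of real polynomials, each of degree at most
`M`.  If the evaluation of `A` at every real number `t` is a singular matrix, then the matrix
of coefficients of `X^M` of the entries of `A` is also singular. -/
theorem det_leadingCoeff_matrix_eq_zero
    (ι : Type*) [Fintype ι] [DecidableEq ι] (M : ℕ)
    (A : Matrix ι ι (Polynomial ℝ))
    (hdeg : ∀ i j, (A i j).degree ≤ (M : ℕ))
    (hdet : ∀ t : ℝ, (Matrix.of fun i j => (A i j).eval t).det = 0) :
    (Matrix.of fun i j => (A i j).coeff M).det = 0 := by
  have hA : A.det = 0 := by
    apply Polynomial.funext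
    intro t
    have h := RingHom.map_det (Polynomial.evalRingHom t) A
    simp only [Polynomial.eval_zero]
    have : (Polynomial.evalRingHom t).mapMatrix A = Matrix.of fun i j => (A i j).eval t := rfl
    rw [show Polynomial.eval t A.det = (Polynomial.evalRingHom t) A.det from rfl, h, this, hdet t]
  have key : (Matrix.of fun i j => (A i j).coeff M).det
      = A.det.coeff (Fintype.card ι * M) := by
    simp only [Matrix.det_apply, Matrix.of_apply]
    rw [Polynomial.finset_sum_coeff]
    refine Finset.sum_congr rfl fun σ _ => ?_
    rw [Polynomial.coeff_smul]
    congr 1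
    rw [← Finset.card_univ]
    exact (Polynomial.coeff_prod_of_natDegree_le _ _ _ fun i _ =>
      Polynomial.natDegree_le_iff_degree_le.2 (hdeg (σ i) i)).symm
  rw [key, hA, Polynomial.coeff_zero]
end

section
/- Let L and L' be finite-dimensional real Lie algebras and let φ : ℝ → (L' ≃ₗ[ℝ] L) define a contraction of L onto L'. Let B be a symmetric invariant bilinear form on L, let c : ℝ → ℝ be a scalar function, and let B' be a bilinear form on L' such that for all x, y ∈ L' the function t ↦ c(t)·B(φ t x, φ t y) converges to B'(x, y) as t → +∞. If B' is non-degenerate, then B is non-degenerate; in particular L is quasi-classical. -/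
open Filter Topology

namespace LinearMap

variable {R M M' N N' : Type*} [CommSemiring R] [AddCommMonoid M] [Module R M]
  [AddCommMonoid M'] [Module R M'] [AddCommMonoid N] [Module R N] [AddCommMonoid N'] [Module R N']

theorem SeparatingLeft.of_smul {B : M →ₗ[R] N →ₗ[R] R} {c : R} (h : (c • B).SeparatingLeft) :
    B.SeparatingLeft :=
  fun x hx => h x fun y => by simp [hx y]

theorem SeparatingLeft.of_compl₁₂ {B : M →ₗ[R] N →ₗ[R] R} {f : M' →ₗ[R] M}
    (hf : Function.Surjective f) (g : N' →ₗ[R] N) (h : (B.compl₁₂ f g).SeparatingLeft) :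
    B.SeparatingLeft := by
  intro x hx
  obtain ⟨x', rfl⟩ := hf x
  rw [h x' fun y => hx (g y), map_zero]

/-- Left separation is an open condition: it is the non-vanishing of a Gram determinant, which
depends continuously on the form. -/
theorem eventually_separatingLeft_of_tendsto {K V ι : Type*} [Field K] [TopologicalSpace K]
    [IsTopologicalRing K] [T1Space K] [AddCommGroup V] [Module K V] [FiniteDimensional K V]
    {l : Filter ι} {F : ι → V →ₗ[K] V →ₗ[K] K} {B : V →ₗ[K] V →ₗ[K] K}
    (hF : ∀ x y, Tendsto (fun i => F i x y) l (𝓝 (B x y))) (hB : B.SeparatingLeft) :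
    ∀ᶠ i in l, (F i).SeparatingLeft := by
  let b := Module.finBasis K V
  have hGram : Tendsto (fun i => toMatrix₂ b b (F i)) l (𝓝 (toMatrix₂ b b B)) :=
    tendsto_pi_nhds.mpr fun i => tendsto_pi_nhds.mpr fun j => by
      simpa only [toMatrix₂_apply] using hF (b i) (b j)
  have hdet := ((continuous_id.matrix_det).tendsto _).comp hGram
  filter_upwards [hdet (isOpen_ne.mem_nhds ((separatingLeft_iff_det_ne_zero b).mp hB))]
    with i hi using (separatingLeft_iff_det_ne_zero b).mpr hi

end LinearMap

theorem contracting_algebra_quasiClassical_of_limit_nondegenerate_general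
    (L L' : Type*) [LieRing L] [LieAlgebra ℝ L]
    [LieRing L'] [LieAlgebra ℝ L'] [FiniteDimensional ℝ L']
    (φ : ℝ → (L' ≃ₗ[ℝ] L))
    (B : L →ₗ[ℝ] L →ₗ[ℝ] ℝ)
    (hsymm : ∀ x y, B x y = B y x)
    (hinv : ∀ x y z, B ⁅x, y⁆ z = B x ⁅y, z⁆)
    (c : ℝ → ℝ) (B' : L' →ₗ[ℝ] L' →ₗ[ℝ] ℝ)
    (hlim : ∀ x y : L', Tendsto (fun t => c t * B (φ t x) (φ t y)) atTop (nhds (B' x y)))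
    (hB' : ∀ x, (∀ y, B' x y = 0) → x = 0) :
    (∀ x, (∀ y, B x y = 0) → x = 0) ∧
    ∃ C : L →ₗ[ℝ] L →ₗ[ℝ] ℝ,
      (∀ x y, C x y = C y x) ∧
      (∀ x y z, C ⁅x, y⁆ z = C x ⁅y, z⁆) ∧
      (∀ x, (∀ y, C x y = 0) → x = 0) := by
  obtain ⟨t, ht⟩ := (LinearMap.eventually_separatingLeft_of_tendsto
    (F := fun t => c t • B.compl₁₂ (φ t).toLinearMap (φ t).toLinearMap) hlim hB').exists
  have hB : B.SeparatingLeft := ht.of_smul.of_compl₁₂ (φ t).surjective _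
  exact ⟨hB, B, hsymm, hinv, hB⟩

/-- Let `φ : ℝ → (L' ≃ₗ[ℝ] L)` define a contraction of the
finite-dimensional real Lie algebra `L` onto the finite-dimensional real Lie algebra `L'`
(convergence in the canonical topology of `L'` being expressed, equivalently, through all
linear functionals).  Let `B` be a symmetric invariant bilinear form on `L`, `c : ℝ → ℝ` a
scalar function, and `B'` a bilinear form on `L'` such that `c(t)·B(φ t x, φ t y) → B'(x,y)` as
`t → +∞` for all `x, y`.  If `B'` is non-degenerate then `B` is non-degenerate; in particular
`L` is quasi-classical. -/
theorem contracting_algebra_quasiClassical_of_limit_nondegenerate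
    (L L' : Type*) [LieRing L] [LieAlgebra ℝ L] [FiniteDimensional ℝ L]
    [LieRing L'] [LieAlgebra ℝ L'] [FiniteDimensional ℝ L']
    (φ : ℝ → (L' ≃ₗ[ℝ] L))
    (hcontr : ∀ x y : L', ∀ f : L' →ₗ[ℝ] ℝ,
      Tendsto (fun t => f ((φ t).symm ⁅φ t x, φ t y⁆)) atTop (nhds (f ⁅x, y⁆)))
    (B : L →ₗ[ℝ] L →ₗ[ℝ] ℝ)
    (hsymm : ∀ x y, B x y = B y x)
    (hinv : ∀ x y z, B ⁅x, y⁆ z = B x ⁅y, z⁆)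
    (c : ℝ → ℝ) (B' : L' →ₗ[ℝ] L' →ₗ[ℝ] ℝ)
    (hlim : ∀ x y : L', Tendsto (fun t => c t * B (φ t x) (φ t y)) atTop (nhds (B' x y)))
    (hB' : ∀ x, (∀ y, B' x y = 0) → x = 0) :
    (∀ x, (∀ y, B x y = 0) → x = 0) ∧
    ∃ C : L →ₗ[ℝ] L →ₗ[ℝ] ℝ,
      (∀ x y, C x y = C y x) ∧
      (∀ x y z, C ⁅x, y⁆ z = C x ⁅y, z⁆) ∧
      (∀ x, (∀ y, C x y = 0) → x = 0) :=
  contracting_algebra_quasiClassical_of_limit_nondegenerate_general L L' φ B hsymm hinv c B' hlim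
    hB'
end

section
/- Let L and L' be finite-dimensional real Lie algebras and let φ : ℝ → (L' ≃ₗ[ℝ] L) define a contraction of L onto L'. Let B be a non-degenerate symmetric invariant bilinear form on L, and suppose there are a scalar function c : ℝ → ℝ and a bilinear form B' on L' such that for all x, y ∈ L' the function t ↦ c(t)·B(φ t x, φ t y) converges to B'(x, y) as t → +∞, with B' non-degenerate. Then B' is a symmetric, invariant, non-degenerate bilinear form on L'; in particular the contraction L' is quasi-classical. -/
open Filter

/-- Let `φ : ℝ → (L' ≃ₗ[ℝ] L)` define a contraction of the
finite-dimensional real Lie algebra `L` onto the finite-dimensional real Lie algebra `L'`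
(convergence in the canonical topology of `L'` being expressed, equivalently, through all
linear functionals).  Let `B` be a non-degenerate symmetric invariant bilinear form on `L`,
and suppose `c : ℝ → ℝ` and a bilinear form `B'` on `L'` satisfy
`c(t)·B(φ t x, φ t y) → B'(x,y)` as `t → +∞`, with `B'` non-degenerate.  Then `B'` is a
symmetric, invariant, non-degenerate bilinear form on `L'`; in particular the contraction `L'`
is quasi-classical. -/
theorem contraction_quasiClassical_of_limit_form
    (L L' : Type*) [LieRing L] [LieAlgebra ℝ L] [FiniteDimensional ℝ L]
    [LieRing L'] [LieAlgebra ℝ L'] [FiniteDimensional ℝ L']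
    (φ : ℝ → (L' ≃ₗ[ℝ] L))
    (hcontr : ∀ x y : L', ∀ f : L' →ₗ[ℝ] ℝ,
      Tendsto (fun t => f ((φ t).symm ⁅φ t x, φ t y⁆)) atTop (nhds (f ⁅x, y⁆)))
    (B : L →ₗ[ℝ] L →ₗ[ℝ] ℝ)
    (hsymm : ∀ x y, B x y = B y x)
    (hinv : ∀ x y z, B ⁅x, y⁆ z = B x ⁅y, z⁆)
    (hnondeg : ∀ x, (∀ y, B x y = 0) → x = 0)
    (c : ℝ → ℝ) (B' : L' →ₗ[ℝ] L' →ₗ[ℝ] ℝ)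
    (hlim : ∀ x y : L', Tendsto (fun t => c t * B (φ t x) (φ t y)) atTop (nhds (B' x y)))
    (hB' : ∀ x, (∀ y, B' x y = 0) → x = 0) :
    ((∀ x y, B' x y = B' y x) ∧
     (∀ x y z, B' ⁅x, y⁆ z = B' x ⁅y, z⁆) ∧
     (∀ x, (∀ y, B' x y = 0) → x = 0)) ∧
    ∃ C : L' →ₗ[ℝ] L' →ₗ[ℝ] ℝ,
      (∀ x y, C x y = C y x) ∧
      (∀ x y z, C ⁅x, y⁆ z = C x ⁅y, z⁆) ∧
      (∀ x, (∀ y, C x y = 0) → x = 0) := by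
  -- symmetry of B'
  have hsymm' : ∀ x y, B' x y = B' y x := by
    intro x y
    refine tendsto_nhds_unique (hlim x y) ?_
    have : (fun t => c t * B (φ t x) (φ t y)) = fun t => c t * B (φ t y) (φ t x) := by
      funext t; rw [hsymm]
    rw [this]; exact hlim y x
  -- key convergence lemma
  have key : ∀ (u : ℝ → L') (u₀ : L') (z : L'),
      (∀ f : L' →ₗ[ℝ] ℝ, Tendsto (fun t => f (u t)) atTop (nhds (f u₀))) →
      Tendsto (fun t => c t * B (φ t (u t)) (φ t z)) atTop (nhds (B' u₀ z)) := by
    intro u u₀ z hu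
    set b := Module.finBasis ℝ L' with hb
    have expand : ∀ (v : L') (t : ℝ),
        c t * B (φ t v) (φ t z) = ∑ i, b.repr v i * (c t * B (φ t (b i)) (φ t z)) := by
      intro v t
      conv_lhs => rw [← b.sum_repr v]
      rw [map_sum, map_sum, LinearMap.sum_apply, Finset.mul_sum]
      refine Finset.sum_congr rfl fun i _ => ?_
      rw [map_smul, map_smul, LinearMap.smul_apply, smul_eq_mul]
      ring
    have expand' : B' u₀ z = ∑ i, b.repr u₀ i * B' (b i) z := by
      conv_lhs => rw [← b.sum_repr u₀]
      rw [map_sum, LinearMap.sum_apply]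
      refine Finset.sum_congr rfl fun i _ => ?_
      rw [map_smul, LinearMap.smul_apply, smul_eq_mul]
    have : Tendsto (fun t => ∑ i, b.repr (u t) i * (c t * B (φ t (b i)) (φ t z)))
        atTop (nhds (∑ i, b.repr u₀ i * B' (b i) z)) := by
      refine tendsto_finset_sum _ fun i _ => ?_
      exact (hu (b.coord i)).mul (hlim (b i) z)
    rw [expand']
    simpa only [← expand] using this
  have hinv' : ∀ x y z, B' ⁅x, y⁆ z = B' x ⁅y, z⁆ := by
    intro x y z
    have h1 : Tendsto (fun t => c t * B (φ t ((φ t).symm ⁅φ t x, φ t y⁆)) (φ t z))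
        atTop (nhds (B' ⁅x, y⁆ z)) := key _ _ z (hcontr x y)
    have h2 : Tendsto (fun t => c t * B (φ t ((φ t).symm ⁅φ t y, φ t z⁆)) (φ t x))
        atTop (nhds (B' ⁅y, z⁆ x)) := key _ _ x (hcontr y z)
    have heq : (fun t => c t * B (φ t ((φ t).symm ⁅φ t x, φ t y⁆)) (φ t z))
        = fun t => c t * B (φ t ((φ t).symm ⁅φ t y, φ t z⁆)) (φ t x) := by
      funext t
      rw [LinearEquiv.apply_symm_apply, LinearEquiv.apply_symm_apply, hinv,
        hsymm (φ t x)]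
    rw [heq] at h1
    have := tendsto_nhds_unique h1 h2
    rw [this, hsymm']
  exact ⟨⟨hsymm', hinv', hB'⟩, B', hsymm', hinv', hB'⟩
end

section
/- Let g = so(3) × ℝ be the product of the Lie algebra of real skew-symmetric 3×3 matrices with the one-dimensional abelian Lie algebra ℝ, and let μ be the skew-symmetric bilinear bracket on ℝ⁴ = (Fin 4 → ℝ) (standard basis e₁,…,e₄) determined by μ(e₂,e₃) = e₁, μ(e₂,e₄) = −e₃, μ(e₃,e₄) = e₂ and all other basis brackets zero (the Lie algebra A_{4,10}). Then A_{4,10} is a contraction of so(3) ⊕ ℝ: there exists a family φ : ℝ → ((Fin 4 → ℝ) ≃ₗ[ℝ] g) of linear equivalences such that for all x, y ∈ Fin 4 → ℝ, (φ t).symm ⁅φ t x, φ t y⁆ converges to μ(x, y) as t → +∞. -/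
attribute [local instance 100] LieRing.ofAssociativeRing

open Matrix in
/-- The Lie algebra `so(3)` of real skew-symmetric `3 × 3` matrices, as a Lie subalgebra of the
matrix Lie algebra with the commutator bracket. -/
def so3 : LieSubalgebra ℝ (Matrix (Fin 3) (Fin 3) ℝ) where
  carrier := {A | Aᵀ = -A}
  add_mem' := by
    intro A B hA hB
    simp only [Set.mem_setOf_eq] at *
    rw [Matrix.transpose_add, hA, hB, neg_add]
  zero_mem' := by simp
  smul_mem' := by
    intro c A hA
    simp only [Set.mem_setOf_eq] at *
    rw [Matrix.transpose_smul, hA, smul_neg]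
  lie_mem' := by
    intro A B hA hB
    simp only [Set.mem_setOf_eq] at *
    rw [Ring.lie_def, Matrix.transpose_sub, Matrix.transpose_mul, Matrix.transpose_mul, hA, hB,
      neg_mul_neg, neg_mul_neg, neg_sub]

/-!
Identify `so(3)` with `(ℝ³, ×)` through the hat map; let `L₁, L₂, L₃` be the standard generators
and `z` that of the abelian factor. For `c ≠ 0` the basis
`e₁ = c² L₃, e₂ = c L₁, e₃ = c L₂, e₄ = L₃ + z` of `so(3) ⊕ ℝ` (`eₖ₊₁` is Lean's index `k`) has
`[e₂,e₃] = e₁, [e₂,e₄] = -e₃, [e₃,e₄] = e₂, [e₁,e₂] = c² e₃, [e₁,e₃] = -c² e₂, [e₁,e₄] = 0`,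
so for `c = e^{-t}` the structure constants converge to those of `A_{4,10}`.
-/

open Matrix

section SkewHat

variable {R : Type*} [CommRing R]

def skewHat : (Fin 3 → R) →ₗ[R] Matrix (Fin 3) (Fin 3) R where
  toFun v := !![0, -v 2, v 1; v 2, 0, -v 0; -v 1, v 0, 0]
  map_add' u v := by ext i j; fin_cases i <;> fin_cases j <;> simp <;> ring
  map_smul' a v := by ext i j; fin_cases i <;> fin_cases j <;> simp

theorem skewHat_apply (v : Fin 3 → R) :
    skewHat v = !![0, -v 2, v 1; v 2, 0, -v 0; -v 1, v 0, 0] := rfl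

theorem transpose_skewHat (v : Fin 3 → R) : (skewHat v)ᵀ = -skewHat v := by
  ext i j; fin_cases i <;> fin_cases j <;> simp [skewHat_apply]

theorem skewHat_eq_of_transpose_eq_neg [IsAddTorsionFree R] {A : Matrix (Fin 3) (Fin 3) R}
    (hA : Aᵀ = -A) : skewHat ![A 2 1, A 0 2, A 1 0] = A := by
  have hA' i j : A j i = -A i j := by simpa using congrFun (congrFun hA i) j
  have hdiag i : A i i = 0 := self_eq_neg.mp (hA' i i)
  ext i j
  fin_cases i <;> fin_cases j <;> simp [skewHat_apply, hA' 0 1, hA' 0 2, hA' 1 2, hdiag]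

theorem lie_skewHat (u v : Fin 3 → R) : ⁅skewHat u, skewHat v⁆ = skewHat (u ⨯₃ v) := by
  ext i j
  fin_cases i <;> fin_cases j <;>
    simp [skewHat_apply, cross_apply, Ring.lie_def] <;> ring

end SkewHat

noncomputable def so3Equiv : (Fin 3 → ℝ) ≃ₗ[ℝ] so3 where
  toFun v := ⟨skewHat v, transpose_skewHat v⟩
  invFun A := ![A.1 2 1, A.1 0 2, A.1 1 0]
  map_add' u v := Subtype.ext (map_add skewHat u v)
  map_smul' a v := Subtype.ext (map_smul skewHat a v)
  left_inv v := by ext i; fin_cases i <;> simp [skewHat_apply]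
  right_inv A := Subtype.ext (skewHat_eq_of_transpose_eq_neg A.2)

theorem lie_so3Equiv (u v : Fin 3 → ℝ) : ⁅so3Equiv u, so3Equiv v⁆ = so3Equiv (u ⨯₃ v) :=
  Subtype.ext (lie_skewHat u v)

section A410

variable {R : Type*} [CommRing R]

def a410Bracket : (Fin 4 → R) →ₗ[R] (Fin 4 → R) →ₗ[R] Fin 4 → R :=
  LinearMap.mk₂ R
    (fun x y => ![x 1 * y 2 - x 2 * y 1, x 2 * y 3 - x 3 * y 2, x 3 * y 1 - x 1 * y 3, 0])
    (fun _ _ _ => by ext i; fin_cases i <;> simp <;> ring)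
    (fun _ _ _ => by ext i; fin_cases i <;> simp <;> ring)
    (fun _ _ _ => by ext i; fin_cases i <;> simp <;> ring)
    (fun _ _ _ => by ext i; fin_cases i <;> simp <;> ring)

theorem a410Bracket_apply (x y : Fin 4 → R) :
    a410Bracket x y = ![x 1 * y 2 - x 2 * y 1, x 2 * y 3 - x 3 * y 2, x 3 * y 1 - x 1 * y 3, 0] :=
  rfl

theorem eq_a410Bracket [IsAddTorsionFree R]
    {μ : (Fin 4 → R) →ₗ[R] (Fin 4 → R) →ₗ[R] Fin 4 → R} (hskew : ∀ x y, μ x y = -μ y x)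
    (h23 : μ (Pi.single 1 1) (Pi.single 2 1) = Pi.single 0 1)
    (h24 : μ (Pi.single 1 1) (Pi.single 3 1) = -Pi.single 2 1)
    (h34 : μ (Pi.single 2 1) (Pi.single 3 1) = Pi.single 1 1)
    (h12 : μ (Pi.single 0 1) (Pi.single 1 1) = 0)
    (h13 : μ (Pi.single 0 1) (Pi.single 2 1) = 0)
    (h14 : μ (Pi.single 0 1) (Pi.single 3 1) = 0) :
    μ = a410Bracket := by
  have hdiag x : μ x x = 0 := self_eq_neg.mp (hskew x x)
  refine LinearMap.ext_basis (Pi.basisFun R (Fin 4)) (Pi.basisFun R (Fin 4)) fun i j => ?_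
  ext k
  fin_cases i <;> fin_cases j <;> fin_cases k <;>
    simp [a410Bracket_apply, hdiag, h23, h24, h34, h12, h13, h14,
      hskew (Pi.single 2 1) (Pi.single 1 1), hskew (Pi.single 3 1) (Pi.single 1 1),
      hskew (Pi.single 3 1) (Pi.single 2 1), hskew (Pi.single 1 1) (Pi.single 0 1),
      hskew (Pi.single 2 1) (Pi.single 0 1), hskew (Pi.single 3 1) (Pi.single 0 1)]

end A410

section Contraction

variable {c : ℝ} (hc : c ≠ 0)

noncomputable def a410Coords : (Fin 4 → ℝ) ≃ₗ[ℝ] (Fin 3 → ℝ) × ℝ where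
  toFun x := (![c * x 1, c * x 2, c ^ 2 * x 0 + x 3], x 3)
  invFun p := ![(p.1 2 - p.2) / c ^ 2, p.1 0 / c, p.1 1 / c, p.2]
  map_add' x y := by
    refine Prod.ext ?_ rfl
    ext i; fin_cases i <;> simp <;> ring
  map_smul' a x := by
    refine Prod.ext ?_ rfl
    ext i; fin_cases i <;> simp <;> ring
  left_inv x := by ext i; fin_cases i <;> simp [field]
  right_inv p := by
    refine Prod.ext ?_ rfl
    ext i; fin_cases i <;> simp [field]

noncomputable def so3ProdContraction : (Fin 4 → ℝ) ≃ₗ[ℝ] so3 × ℝ :=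
  (a410Coords hc).trans (so3Equiv.prodCongr (LinearEquiv.refl ℝ ℝ))

theorem so3ProdContraction_apply (x : Fin 4 → ℝ) :
    so3ProdContraction hc x = (so3Equiv ![c * x 1, c * x 2, c ^ 2 * x 0 + x 3], x 3) :=
  rfl

theorem so3ProdContraction_symm_lie (x y : Fin 4 → ℝ) :
    (so3ProdContraction hc).symm ⁅so3ProdContraction hc x, so3ProdContraction hc y⁆ =
      a410Bracket x y + c ^ 2 • ![0, x 2 * y 0 - x 0 * y 2, x 0 * y 1 - x 1 * y 0, 0] := by
  have hℝ : ⁅x 3, y 3⁆ = 0 := commute_iff_lie_eq.mp (Commute.all _ _)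
  rw [LinearEquiv.symm_apply_eq, so3ProdContraction_apply, so3ProdContraction_apply,
    so3ProdContraction_apply, Prod.bracket_def, lie_so3Equiv, hℝ]
  refine Prod.ext (congrArg so3Equiv ?_) (by simp [a410Bracket_apply])
  ext i; fin_cases i <;> simp [cross_apply, a410Bracket_apply] <;> ring

end Contraction

open Filter in
/-- The Lie algebra `A_{4,10}`, given on `ℝ⁴` (standard basis `e₁, …, e₄`) by
`μ(e₂,e₃) = e₁`, `μ(e₂,e₄) = −e₃`, `μ(e₃,e₄) = e₂` and all other basis brackets zero, is a
contraction of the reductive Lie algebra `so(3) ⊕ ℝ`. -/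
theorem A410_is_contraction_of_so3_sum_R
    (e : Fin 4 → (Fin 4 → ℝ)) (he : ∀ i, e i = Pi.single i 1)
    (μ : (Fin 4 → ℝ) →ₗ[ℝ] (Fin 4 → ℝ) →ₗ[ℝ] (Fin 4 → ℝ))
    (hskew : ∀ x y, μ x y = - μ y x)
    (h23 : μ (e 1) (e 2) = e 0)
    (h24 : μ (e 1) (e 3) = - e 2)
    (h34 : μ (e 2) (e 3) = e 1)
    (h12 : μ (e 0) (e 1) = 0)
    (h13 : μ (e 0) (e 2) = 0)
    (h14 : μ (e 0) (e 3) = 0) :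
    ∃ φ : ℝ → ((Fin 4 → ℝ) ≃ₗ[ℝ] (so3 × ℝ)),
      ∀ x y : Fin 4 → ℝ,
        Tendsto (fun t => (φ t).symm ⁅φ t x, φ t y⁆) atTop (nhds (μ x y)) := by
  obtain rfl : e = fun i => Pi.single i 1 := funext he
  obtain rfl : μ = a410Bracket := eq_a410Bracket hskew h23 h24 h34 h12 h13 h14
  refine ⟨fun t => so3ProdContraction (Real.exp_ne_zero (-t)), fun x y => ?_⟩
  simp only [so3ProdContraction_symm_lie]
  have hscale : Tendsto (fun t : ℝ => Real.exp (-t) ^ 2) atTop (nhds 0) := by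
    simpa using (Real.tendsto_exp_atBot.comp tendsto_neg_atTop_atBot).pow 2
  simpa only [zero_smul, add_zero] using (hscale.smul_const _).const_add (a410Bracket x y)
end

section
/- Let μ be the skew-symmetric bilinear bracket on ℝ⁶ = (Fin 6 → ℝ) (standard basis e₁,…,e₆) determined by μ(e₁,e₂) = e₆, μ(e₁,e₃) = e₄, μ(e₂,e₃) = −e₅ and all other basis brackets zero (the nilpotent Lie algebra A_{6,3}). Then A_{6,3} is quasi-classical: there exists a bilinear form B on ℝ⁶ that is symmetric, non-degenerate, and invariant for μ, i.e. B(μ(x,y), z) = B(x, μ(y,z)) for all x, y, z ∈ ℝ⁶. -/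
set_option maxHeartbeats 1600000
set_option synthInstance.maxHeartbeats 200000

/-- The invariant form for `A_{6,3}`: it pairs `e₁↔e₅` and `e₂↔e₄` with `-1`,
and `e₃↔e₆` with `+1`. -/
noncomputable def A63B : (Fin 6 → ℝ) →ₗ[ℝ] (Fin 6 → ℝ) →ₗ[ℝ] ℝ :=
  LinearMap.mk₂ ℝ
    (fun x y => -(x 0 * y 4) - x 1 * y 3 + x 2 * y 5 - x 4 * y 0 - x 3 * y 1 + x 5 * y 2)
    (by intros; simp [Pi.add_apply]; ring)
    (by intros; simp [Pi.smul_apply, smul_eq_mul]; ring)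
    (by intros; simp [Pi.add_apply]; ring)
    (by intros; simp [Pi.smul_apply, smul_eq_mul]; ring)

/-- Table of values of `A63B` on the standard basis. -/
noncomputable def A63T (i j : Fin 6) : ℝ :=
  if i = 0 ∧ j = 4 ∨ i = 4 ∧ j = 0 ∨ i = 1 ∧ j = 3 ∨ i = 3 ∧ j = 1 then -1
  else if i = 2 ∧ j = 5 ∨ i = 5 ∧ j = 2 then 1 else 0

theorem hBtable : ∀ i j : Fin 6, A63B (Pi.single i 1) (Pi.single j 1) = A63T i j := by
  intro i j
  fin_cases i <;> fin_cases j <;>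
    simp +decide [A63B, A63T, LinearMap.mk₂_apply, Pi.single_apply]

/-- The nilpotent Lie algebra `A_{6,3}`, given on `ℝ⁶` (standard basis
`e₁, …, e₆`) by `μ(e₁,e₂) = e₆`, `μ(e₁,e₃) = e₄`, `μ(e₂,e₃) = −e₅` and all other basis
brackets zero, is quasi-classical: it admits a symmetric, non-degenerate bilinear form that is
invariant for `μ`. -/
theorem A63_quasiClassical
    (e : Fin 6 → (Fin 6 → ℝ)) (he : ∀ i, e i = Pi.single i 1)
    (μ : (Fin 6 → ℝ) →ₗ[ℝ] (Fin 6 → ℝ) →ₗ[ℝ] (Fin 6 → ℝ))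
    (hskew : ∀ x y, μ x y = - μ y x)
    (h12 : μ (e 0) (e 1) = e 5)
    (h13 : μ (e 0) (e 2) = e 3)
    (h23 : μ (e 1) (e 2) = - e 4)
    (h14 : μ (e 0) (e 3) = 0) (h15 : μ (e 0) (e 4) = 0) (h16 : μ (e 0) (e 5) = 0)
    (h24 : μ (e 1) (e 3) = 0) (h25 : μ (e 1) (e 4) = 0) (h26 : μ (e 1) (e 5) = 0)
    (h34 : μ (e 2) (e 3) = 0) (h35 : μ (e 2) (e 4) = 0) (h36 : μ (e 2) (e 5) = 0)
    (h45 : μ (e 3) (e 4) = 0) (h46 : μ (e 3) (e 5) = 0) (h56 : μ (e 4) (e 5) = 0) :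
    ∃ B : (Fin 6 → ℝ) →ₗ[ℝ] (Fin 6 → ℝ) →ₗ[ℝ] ℝ,
      (∀ x y, B x y = B y x) ∧
      (∀ x, (∀ y, B x y = 0) → x = 0) ∧
      (∀ x y z, B (μ x y) z = B x (μ y z)) := by
  refine ⟨A63B, ?_, ?_, ?_⟩
  · -- symmetry
    intro x y
    simp only [A63B, LinearMap.mk₂_apply]
    ring
  · -- non-degeneracy
    intro x hx
    have h0 := hx (Pi.single 4 1)
    have h1 := hx (Pi.single 3 1)
    have h2 := hx (Pi.single 5 1)
    have h3 := hx (Pi.single 1 1)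
    have h4 := hx (Pi.single 0 1)
    have h5 := hx (Pi.single 2 1)
    clear hx
    simp [A63B, Pi.single_apply] at h0 h1 h2 h3 h4 h5
    funext i
    fin_cases i
    exacts [h0, h1, h2, h3, h4, h5]
  · -- invariance
    have hdiag : ∀ x, μ x x = 0 := by
      intro x
      have h2 : (2 : ℝ) • μ x x = 0 := by
        rw [two_smul]; nth_rewrite 1 [hskew x x]; exact neg_add_cancel _
      simpa using smul_eq_zero.mp h2
    have h21 : μ (e 1) (e 0) = -(e 5) := by rw [hskew, h12]
    have h31 : μ (e 2) (e 0) = -(e 3) := by rw [hskew, h13]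
    have h32 : μ (e 2) (e 1) = e 4 := by rw [hskew, h23]; simp
    have h41 : μ (e 3) (e 0) = 0 := by rw [hskew, h14]; simp
    have h51 : μ (e 4) (e 0) = 0 := by rw [hskew, h15]; simp
    have h61 : μ (e 5) (e 0) = 0 := by rw [hskew, h16]; simp
    have h42 : μ (e 3) (e 1) = 0 := by rw [hskew, h24]; simp
    have h52 : μ (e 4) (e 1) = 0 := by rw [hskew, h25]; simp
    have h62 : μ (e 5) (e 1) = 0 := by rw [hskew, h26]; simp
    have h43 : μ (e 3) (e 2) = 0 := by rw [hskew, h34]; simp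
    have h53 : μ (e 4) (e 2) = 0 := by rw [hskew, h35]; simp
    have h63 : μ (e 5) (e 2) = 0 := by rw [hskew, h36]; simp
    have h54 : μ (e 4) (e 3) = 0 := by rw [hskew, h45]; simp
    have h64 : μ (e 5) (e 3) = 0 := by rw [hskew, h46]; simp
    have h65 : μ (e 5) (e 4) = 0 := by rw [hskew, h56]; simp
    have hd : ∀ i : Fin 6, μ (Pi.single i 1) (Pi.single i 1) = 0 := fun i => hdiag _
    simp only [he] at h12 h13 h23 h14 h15 h16 h24 h25 h26 h34 h35 h36 h45 h46 h56 h21 h31 h32 h41 h51 h61 h42 h52 h62 h43 h53 h63 h54 h64 h65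
    have key : ∀ i j k : Fin 6,
        A63B (μ (Pi.single i 1) (Pi.single j 1)) (Pi.single k 1)
          = A63B (Pi.single i 1) (μ (Pi.single j 1) (Pi.single k 1)) := by
      intro i j k
      fin_cases i <;> fin_cases j <;> fin_cases k <;>
        simp only [Fin.zero_eta, Fin.mk_one, Fin.reduceFinMk, h12, h13, h23, h14, h15, h16,
          h24, h25, h26, h34, h35, h36, h45, h46, h56,
          h21, h31, h32, h41, h51, h61, h42, h52, h62, h43, h53, h63, h54, h64, h65,
          hd, map_zero, LinearMap.zero_apply, map_neg, LinearMap.neg_apply, neg_neg,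
          hBtable] <;> simp +decide [A63T]
    intro x y z
    have hexp : ∀ w : Fin 6 → ℝ, w = ∑ i, w i • (Pi.single i 1 : Fin 6 → ℝ) := by
      intro w
      funext j
      simp [Pi.single_apply, Finset.sum_apply, mul_comm]
    rw [hexp x, hexp y, hexp z]
    simp only [map_sum, map_smul, LinearMap.sum_apply, LinearMap.smul_apply, smul_eq_mul]
    refine Finset.sum_congr rfl fun i _ => ?_
    congr 1
    refine Finset.sum_congr rfl fun j _ => ?_
    congr 1
    refine Finset.sum_congr rfl fun k _ => ?_
    congr 1
    exact key k j i
end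

section
/- Fix a real number η ≥ 2. Let μ be the skew-symmetric bilinear bracket on ℝ⁶ = (Fin 6 → ℝ) (standard basis e₁,…,e₆) determined by μ(e₁,e₂) = η²e₄, μ(e₁,e₃) = −η²e₅, μ(e₁,e₄) = η²e₂, μ(e₁,e₅) = −η²e₃, μ(e₂,e₄) = e₁ + e₆, μ(e₂,e₅) = −ηe₆, μ(e₂,e₆) = e₄ + ηe₅, μ(e₃,e₄) = ηe₆, μ(e₃,e₅) = e₁, μ(e₃,e₆) = ηe₄, μ(e₄,e₆) = e₂ − ηe₃, μ(e₅,e₆) = −ηe₂, and all other basis brackets zero (a realization of the Lorentz algebra so(3,1)). Let φ t be the diagonal linear equivalence of ℝ⁶ with φ t (e₁) = t⁻²e₁, φ t (eᵢ) = t⁻¹eᵢ for i = 2,3,4,5, and φ t (e₆) = e₆ (for t ≠ 0). Then for all x, y ∈ ℝ⁶, (φ t)⁻¹ (μ(φ t x, φ t y)) converges, as t → +∞, to μ'(x,y), where μ' is the bracket with μ'(e₂,e₄) = e₁, μ'(e₃,e₅) = e₁, μ'(e₂,e₆) = e₄ + ηe₅, μ'(e₃,e₆) = ηe₄, μ'(e₄,e₆)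 = e₂ − ηe₃, μ'(e₅,e₆) = −ηe₂, and all other basis brackets zero (the quasi-classical solvable Lie algebra g_{6,93}^{0,η}). -/
open Filter

set_option maxHeartbeats 2000000 in
/-- For `η ≥ 2`, the diagonal contraction
`φ t = diag(t⁻², t⁻¹, t⁻¹, t⁻¹, t⁻¹, 1)` contracts the realization `μ` of the Lorentz algebra
`so(3,1)` given in the statement onto the quasi-classical solvable Lie algebra
`g_{6,93}^{0,η}` with bracket `μ'`: for all `x, y ∈ ℝ⁶`, `(φ t)⁻¹ (μ (φ t x) (φ t y))`
converges to `μ'(x,y)` as `t → +∞`. -/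
theorem lorentz_contracts_to_g693
    (η : ℝ) (hη : 2 ≤ η)
    (e : Fin 6 → (Fin 6 → ℝ)) (he : ∀ i, e i = Pi.single i 1)
    (μ : (Fin 6 → ℝ) →ₗ[ℝ] (Fin 6 → ℝ) →ₗ[ℝ] (Fin 6 → ℝ))
    (hskew : ∀ x y, μ x y = - μ y x)
    (h12 : μ (e 0) (e 1) = η ^ 2 • e 3)
    (h13 : μ (e 0) (e 2) = - (η ^ 2 • e 4))
    (h14 : μ (e 0) (e 3) = η ^ 2 • e 1)
    (h15 : μ (e 0) (e 4) = - (η ^ 2 • e 2))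
    (h24 : μ (e 1) (e 3) = e 0 + e 5)
    (h25 : μ (e 1) (e 4) = - (η • e 5))
    (h26 : μ (e 1) (e 5) = e 3 + η • e 4)
    (h34 : μ (e 2) (e 3) = η • e 5)
    (h35 : μ (e 2) (e 4) = e 0)
    (h36 : μ (e 2) (e 5) = η • e 3)
    (h46 : μ (e 3) (e 5) = e 1 - η • e 2)
    (h56 : μ (e 4) (e 5) = - (η • e 1))
    (h16 : μ (e 0) (e 5) = 0) (h23 : μ (e 1) (e 2) = 0) (h45 : μ (e 3) (e 4) = 0)
    (μ' : (Fin 6 → ℝ) →ₗ[ℝ] (Fin 6 → ℝ) →ₗ[ℝ] (Fin 6 → ℝ))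
    (hskew' : ∀ x y, μ' x y = - μ' y x)
    (h24' : μ' (e 1) (e 3) = e 0)
    (h35' : μ' (e 2) (e 4) = e 0)
    (h26' : μ' (e 1) (e 5) = e 3 + η • e 4)
    (h36' : μ' (e 2) (e 5) = η • e 3)
    (h46' : μ' (e 3) (e 5) = e 1 - η • e 2)
    (h56' : μ' (e 4) (e 5) = - (η • e 1))
    (h12' : μ' (e 0) (e 1) = 0) (h13' : μ' (e 0) (e 2) = 0) (h14' : μ' (e 0) (e 3) = 0)
    (h15' : μ' (e 0) (e 4) = 0) (h16' : μ' (e 0) (e 5) = 0) (h23' : μ' (e 1) (e 2) = 0)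
    (h25' : μ' (e 1) (e 4) = 0) (h34' : μ' (e 2) (e 3) = 0) (h45' : μ' (e 3) (e 4) = 0)
    (φ : ℝ → ((Fin 6 → ℝ) ≃ₗ[ℝ] (Fin 6 → ℝ)))
    (hφ : ∀ t : ℝ, t ≠ 0 →
      φ t (e 0) = (t ^ 2)⁻¹ • e 0 ∧
      φ t (e 1) = t⁻¹ • e 1 ∧ φ t (e 2) = t⁻¹ • e 2 ∧
      φ t (e 3) = t⁻¹ • e 3 ∧ φ t (e 4) = t⁻¹ • e 4 ∧
      φ t (e 5) = e 5) :
    ∀ x y : Fin 6 → ℝ,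
      Tendsto (fun t => (φ t).symm (μ (φ t x) (φ t y))) atTop (nhds (μ' x y)) := by
  intro x y
  -- diagonal brackets vanish
  have hdiag : ∀ z : Fin 6 → ℝ, μ z z = 0 := by
    intro z
    have h : μ z z + μ z z = 0 := by nth_rewrite 2 [hskew z z]; simp
    have h2 := congrArg (fun w => (2:ℝ)⁻¹ • w) h
    simpa [smul_add, ← two_smul ℝ (μ z z), smul_smul] using h2
  have hdiag' : ∀ z : Fin 6 → ℝ, μ' z z = 0 := by
    intro z
    have h : μ' z z + μ' z z = 0 := by nth_rewrite 2 [hskew' z z]; simp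
    have h2 := congrArg (fun w => (2:ℝ)⁻¹ • w) h
    simpa [smul_add, ← two_smul ℝ (μ' z z), smul_smul] using h2
  -- reversed brackets
  have h21 : μ (e 1) (e 0) = -(η ^ 2 • e 3) := by rw [hskew, h12]
  have h31 : μ (e 2) (e 0) = η ^ 2 • e 4 := by rw [hskew, h13]; simp
  have h41 : μ (e 3) (e 0) = -(η ^ 2 • e 1) := by rw [hskew, h14]
  have h51 : μ (e 4) (e 0) = η ^ 2 • e 2 := by rw [hskew, h15]; simp
  have h61 : μ (e 5) (e 0) = 0 := by rw [hskew, h16]; simp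
  have h32 : μ (e 2) (e 1) = 0 := by rw [hskew, h23]; simp
  have h42 : μ (e 3) (e 1) = -(e 0 + e 5) := by rw [hskew, h24]
  have h52 : μ (e 4) (e 1) = η • e 5 := by rw [hskew, h25]; simp
  have h62 : μ (e 5) (e 1) = -(e 3 + η • e 4) := by rw [hskew, h26]
  have h43 : μ (e 3) (e 2) = -(η • e 5) := by rw [hskew, h34]
  have h53 : μ (e 4) (e 2) = -(e 0) := by rw [hskew, h35]
  have h63 : μ (e 5) (e 2) = -(η • e 3) := by rw [hskew, h36]
  have h54 : μ (e 4) (e 3) = 0 := by rw [hskew, h45]; simp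
  have h64 : μ (e 5) (e 3) = -(e 1 - η • e 2) := by rw [hskew, h46]
  have h65 : μ (e 5) (e 4) = η • e 1 := by rw [hskew, h56]; simp
  have h21' : μ' (e 1) (e 0) = 0 := by rw [hskew', h12']; simp
  have h31' : μ' (e 2) (e 0) = 0 := by rw [hskew', h13']; simp
  have h41' : μ' (e 3) (e 0) = 0 := by rw [hskew', h14']; simp
  have h51' : μ' (e 4) (e 0) = 0 := by rw [hskew', h15']; simp
  have h61' : μ' (e 5) (e 0) = 0 := by rw [hskew', h16']; simp
  have h32' : μ' (e 2) (e 1) = 0 := by rw [hskew', h23']; simp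
  have h42' : μ' (e 3) (e 1) = -(e 0) := by rw [hskew', h24']
  have h52' : μ' (e 4) (e 1) = 0 := by rw [hskew', h25']; simp
  have h62' : μ' (e 5) (e 1) = -(e 3 + η • e 4) := by rw [hskew', h26']
  have h43' : μ' (e 3) (e 2) = 0 := by rw [hskew', h34']; simp
  have h53' : μ' (e 4) (e 2) = -(e 0) := by rw [hskew', h35']
  have h63' : μ' (e 5) (e 2) = -(η • e 3) := by rw [hskew', h36']
  have h54' : μ' (e 4) (e 3) = 0 := by rw [hskew', h45']; simp
  have h64' : μ' (e 5) (e 3) = -(e 1 - η • e 2) := by rw [hskew', h46']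
  have h65' : μ' (e 5) (e 4) = η • e 1 := by rw [hskew', h56']; simp
  have hbasis : ∀ z : Fin 6 → ℝ,
      z = z 0 • e 0 + z 1 • e 1 + z 2 • e 2 + z 3 • e 3 + z 4 • e 4 + z 5 • e 5 := by
    intro z; funext i; fin_cases i <;> simp [he]
  have key : ∀ t : ℝ, t ≠ 0 →
      (φ t).symm (μ (φ t x) (φ t y)) = μ' x y + (t ^ 2)⁻¹ •
        ((η ^ 2 * (x 0 * y 3 - x 3 * y 0)) • e 1 + (-(η ^ 2) * (x 0 * y 4 - x 4 * y 0)) • e 2 +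
         (η ^ 2 * (x 0 * y 1 - x 1 * y 0)) • e 3 + (-(η ^ 2) * (x 0 * y 2 - x 2 * y 0)) • e 4 +
         ((x 1 * y 3 - x 3 * y 1) + η * (x 2 * y 3 - x 3 * y 2) - η * (x 1 * y 4 - x 4 * y 1)) • e 5) := by
    intro t ht
    obtain ⟨hφ0, hφ1, hφ2, hφ3, hφ4, hφ5⟩ := hφ t ht
    have hs0 : (φ t).symm (e 0) = t ^ 2 • e 0 := by
      rw [← one_smul ℝ ((φ t).symm (e 0)), ← mul_inv_cancel₀ (pow_ne_zero 2 ht), mul_smul,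
        ← map_smul, ← hφ0, LinearEquiv.symm_apply_apply]
    have hsgen : ∀ w : Fin 6 → ℝ, φ t w = t⁻¹ • w → (φ t).symm w = t • w := by
      intro w hw
      rw [← one_smul ℝ ((φ t).symm w), ← mul_inv_cancel₀ ht, mul_smul,
        ← map_smul, ← hw, LinearEquiv.symm_apply_apply]
    have hs1 := hsgen (e 1) hφ1
    have hs2 := hsgen (e 2) hφ2
    have hs3 := hsgen (e 3) hφ3
    have hs4 := hsgen (e 4) hφ4
    have hs5 : (φ t).symm (e 5) = e 5 := by
      nth_rewrite 1 [← hφ5]; exact (φ t).symm_apply_apply _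
    have hexp : μ' x y = μ' (x 0 • e 0 + x 1 • e 1 + x 2 • e 2 + x 3 • e 3 + x 4 • e 4 + x 5 • e 5)
        (y 0 • e 0 + y 1 • e 1 + y 2 • e 2 + y 3 • e 3 + y 4 • e 4 + y 5 • e 5) := by
      rw [← hbasis x, ← hbasis y]
    rw [hexp]
    conv_lhs => rw [hbasis x, hbasis y]
    simp only [map_add, map_smul, LinearMap.add_apply, LinearMap.smul_apply,
      hφ0, hφ1, hφ2, hφ3, hφ4, hφ5,
      hdiag, hdiag',
      h12, h13, h14, h15, h16, h23, h24, h25, h26, h34, h35, h36, h45, h46, h56,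
      h21, h31, h41, h51, h61, h32, h42, h52, h62, h43, h53, h63, h54, h64, h65,
      h12', h13', h14', h15', h16', h23', h24', h25', h26', h34', h35', h36', h45', h46', h56',
      h21', h31', h41', h51', h61', h32', h42', h52', h62', h43', h53', h63', h54', h64', h65',
      smul_add, smul_sub, smul_neg, smul_smul, smul_zero, map_neg, map_sub, map_zero,
      hs0, hs1, hs2, hs3, hs4, hs5]
    match_scalars <;> field_simp <;> ring
  have hlim : ∀ w : Fin 6 → ℝ,
      Tendsto (fun t : ℝ => μ' x y + (t ^ 2)⁻¹ • w) atTop (nhds (μ' x y)) := by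
    intro w
    have h1 : Tendsto (fun t : ℝ => (t ^ 2)⁻¹) atTop (nhds 0) :=
      (tendsto_pow_atTop two_ne_zero).inv_tendsto_atTop
    simpa using tendsto_const_nhds.add (h1.smul_const w)
  have hev : (fun t : ℝ => μ' x y + (t ^ 2)⁻¹ •
        ((η ^ 2 * (x 0 * y 3 - x 3 * y 0)) • e 1 + (-(η ^ 2) * (x 0 * y 4 - x 4 * y 0)) • e 2 +
         (η ^ 2 * (x 0 * y 1 - x 1 * y 0)) • e 3 + (-(η ^ 2) * (x 0 * y 2 - x 2 * y 0)) • e 4 +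
         ((x 1 * y 3 - x 3 * y 1) + η * (x 2 * y 3 - x 3 * y 2) - η * (x 1 * y 4 - x 4 * y 1)) • e 5))
      =ᶠ[atTop] (fun t => (φ t).symm (μ (φ t x) (φ t y))) := by
    filter_upwards [eventually_ne_atTop 0] with t ht
    exact (key t ht).symm
  exact Tendsto.congr' hev (hlim _)
end

section
/- Fix a real number α. Let μ be the skew-symmetric bilinear bracket on ℝ⁶ = (Fin 6 → ℝ) (standard basis e₁,…,e₆) determined by μ(e₂,e₃) = e₁, μ(e₁,e₆) = 2αe₁, μ(e₂,e₆) = αe₂ + e₃ + e₄, μ(e₃,e₆) = −e₂ + αe₃ + e₅, μ(e₄,e₆) = αe₄ + e₅, μ(e₅,e₆) = −e₄ + αe₅, and all other basis brackets zero (the solvable Lie algebra r_{6,38}^α). For t ≠ 0 let f t be the diagonal linear equivalence of ℝ⁶ with f t (eᵢ) = t²eᵢ for i = 1, 4, 5 and f t (eᵢ) = t eᵢ for i = 2, 3, 6. Then for all x, y ∈ ℝ⁶, (f t)⁻¹ (μ(f t x, f t y)) converges, as t → 0 along t ≠ 0, to μ'(x,y), where μ' is the bracket with μ'(e₂,e₃)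 = e₁, μ'(e₂,e₆) = e₄, μ'(e₃,e₆) = e₅, and all other basis brackets zero (a nilpotent Lie algebra isomorphic to A_{6,3}). -/
open Filter Topology

noncomputable def Rmap (α : ℝ) (e : Fin 6 → (Fin 6 → ℝ)) :
    (Fin 6 → ℝ) →ₗ[ℝ] (Fin 6 → ℝ) →ₗ[ℝ] (Fin 6 → ℝ) :=
  LinearMap.mk₂ ℝ (fun x y =>
      (x 0 * y 5 - x 5 * y 0) • ((2 * α) • e 0)
      + (x 1 * y 5 - x 5 * y 1) • (α • e 1 + e 2)
      + (x 2 * y 5 - x 5 * y 2) • (-(e 1) + α • e 2)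
      + (x 3 * y 5 - x 5 * y 3) • (α • e 3 + e 4)
      + (x 4 * y 5 - x 5 * y 4) • (-(e 3) + α • e 4))
    (by intro m1 m2 n; simp only [Pi.add_apply]; module)
    (by intro c m n; simp only [Pi.smul_apply, smul_eq_mul]; module)
    (by intro m n1 n2; simp only [Pi.add_apply]; module)
    (by intro c m n; simp only [Pi.smul_apply, smul_eq_mul]; module)

@[simp] lemma Rmap_apply (α : ℝ) (e : Fin 6 → (Fin 6 → ℝ)) (x y : Fin 6 → ℝ) :
    Rmap α e x y =
      (x 0 * y 5 - x 5 * y 0) • ((2 * α) • e 0)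
      + (x 1 * y 5 - x 5 * y 1) • (α • e 1 + e 2)
      + (x 2 * y 5 - x 5 * y 2) • (-(e 1) + α • e 2)
      + (x 3 * y 5 - x 5 * y 3) • (α • e 3 + e 4)
      + (x 4 * y 5 - x 5 * y 4) • (-(e 3) + α • e 4) := rfl

set_option maxHeartbeats 2000000 in
/-- For any `α ∈ ℝ`, the diagonal family
`f t = diag(t², t, t, t², t², t)` contracts the solvable Lie algebra `r_{6,38}^α` with bracket
`μ` onto the nilpotent Lie algebra (isomorphic to `A_{6,3}`) with bracket `μ'`: for all
`x, y ∈ ℝ⁶`, `(f t)⁻¹ (μ (f t x) (f t y))` converges to `μ'(x,y)` as `t → 0` along `t ≠ 0`. -/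
theorem r638_contracts_to_A63
    (α : ℝ)
    (e : Fin 6 → (Fin 6 → ℝ)) (he : ∀ i, e i = Pi.single i 1)
    (μ : (Fin 6 → ℝ) →ₗ[ℝ] (Fin 6 → ℝ) →ₗ[ℝ] (Fin 6 → ℝ))
    (hskew : ∀ x y, μ x y = - μ y x)
    (h23 : μ (e 1) (e 2) = e 0)
    (h16 : μ (e 0) (e 5) = (2 * α) • e 0)
    (h26 : μ (e 1) (e 5) = α • e 1 + e 2 + e 3)
    (h36 : μ (e 2) (e 5) = - e 1 + α • e 2 + e 4)
    (h46 : μ (e 3) (e 5) = α • e 3 + e 4)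
    (h56 : μ (e 4) (e 5) = - e 3 + α • e 4)
    (h12 : μ (e 0) (e 1) = 0) (h13 : μ (e 0) (e 2) = 0) (h14 : μ (e 0) (e 3) = 0)
    (h15 : μ (e 0) (e 4) = 0) (h24 : μ (e 1) (e 3) = 0) (h25 : μ (e 1) (e 4) = 0)
    (h34 : μ (e 2) (e 3) = 0) (h35 : μ (e 2) (e 4) = 0) (h45 : μ (e 3) (e 4) = 0)
    (μ' : (Fin 6 → ℝ) →ₗ[ℝ] (Fin 6 → ℝ) →ₗ[ℝ] (Fin 6 → ℝ))
    (hskew' : ∀ x y, μ' x y = - μ' y x)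
    (h23' : μ' (e 1) (e 2) = e 0)
    (h26' : μ' (e 1) (e 5) = e 3)
    (h36' : μ' (e 2) (e 5) = e 4)
    (h12' : μ' (e 0) (e 1) = 0) (h13' : μ' (e 0) (e 2) = 0) (h14' : μ' (e 0) (e 3) = 0)
    (h15' : μ' (e 0) (e 4) = 0) (h16' : μ' (e 0) (e 5) = 0) (h24' : μ' (e 1) (e 3) = 0)
    (h25' : μ' (e 1) (e 4) = 0) (h34' : μ' (e 2) (e 3) = 0) (h35' : μ' (e 2) (e 4) = 0)
    (h45' : μ' (e 3) (e 4) = 0) (h46' : μ' (e 3) (e 5) = 0) (h56' : μ' (e 4) (e 5) = 0)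
    (f : ℝ → ((Fin 6 → ℝ) ≃ₗ[ℝ] (Fin 6 → ℝ)))
    (hf : ∀ t : ℝ, t ≠ 0 →
      f t (e 0) = t ^ 2 • e 0 ∧ f t (e 3) = t ^ 2 • e 3 ∧ f t (e 4) = t ^ 2 • e 4 ∧
      f t (e 1) = t • e 1 ∧ f t (e 2) = t • e 2 ∧ f t (e 5) = t • e 5) :
    ∀ x y : Fin 6 → ℝ,
      Tendsto (fun t => (f t).symm (μ (f t x) (f t y))) (𝓝[≠] (0 : ℝ)) (nhds (μ' x y)) := by
  have hd : ∀ z, μ z z = 0 := by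
    intro z
    have h := hskew z z
    have h2 : (2:ℝ) • μ z z = 0 := by
      rw [two_smul]; nth_rewrite 1 [h]; simp
    simpa using (smul_eq_zero.mp h2).resolve_left (by norm_num)
  have hd' : ∀ z, μ' z z = 0 := by
    intro z
    have h := hskew' z z
    have h2 : (2:ℝ) • μ' z z = 0 := by
      rw [two_smul]; nth_rewrite 1 [h]; simp
    simpa using (smul_eq_zero.mp h2).resolve_left (by norm_num)
  have rh12 : μ (e 1) (e 0) = -(μ (e 0) (e 1)) := hskew _ _
  have rh12' : μ' (e 1) (e 0) = -(μ' (e 0) (e 1)) := hskew' _ _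
  have rh13 : μ (e 2) (e 0) = -(μ (e 0) (e 2)) := hskew _ _
  have rh13' : μ' (e 2) (e 0) = -(μ' (e 0) (e 2)) := hskew' _ _
  have rh14 : μ (e 3) (e 0) = -(μ (e 0) (e 3)) := hskew _ _
  have rh14' : μ' (e 3) (e 0) = -(μ' (e 0) (e 3)) := hskew' _ _
  have rh15 : μ (e 4) (e 0) = -(μ (e 0) (e 4)) := hskew _ _
  have rh15' : μ' (e 4) (e 0) = -(μ' (e 0) (e 4)) := hskew' _ _
  have rh16 : μ (e 5) (e 0) = -(μ (e 0) (e 5)) := hskew _ _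
  have rh16' : μ' (e 5) (e 0) = -(μ' (e 0) (e 5)) := hskew' _ _
  have rh23 : μ (e 2) (e 1) = -(μ (e 1) (e 2)) := hskew _ _
  have rh23' : μ' (e 2) (e 1) = -(μ' (e 1) (e 2)) := hskew' _ _
  have rh24 : μ (e 3) (e 1) = -(μ (e 1) (e 3)) := hskew _ _
  have rh24' : μ' (e 3) (e 1) = -(μ' (e 1) (e 3)) := hskew' _ _
  have rh25 : μ (e 4) (e 1) = -(μ (e 1) (e 4)) := hskew _ _
  have rh25' : μ' (e 4) (e 1) = -(μ' (e 1) (e 4)) := hskew' _ _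
  have rh26 : μ (e 5) (e 1) = -(μ (e 1) (e 5)) := hskew _ _
  have rh26' : μ' (e 5) (e 1) = -(μ' (e 1) (e 5)) := hskew' _ _
  have rh34 : μ (e 3) (e 2) = -(μ (e 2) (e 3)) := hskew _ _
  have rh34' : μ' (e 3) (e 2) = -(μ' (e 2) (e 3)) := hskew' _ _
  have rh35 : μ (e 4) (e 2) = -(μ (e 2) (e 4)) := hskew _ _
  have rh35' : μ' (e 4) (e 2) = -(μ' (e 2) (e 4)) := hskew' _ _
  have rh36 : μ (e 5) (e 2) = -(μ (e 2) (e 5)) := hskew _ _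
  have rh36' : μ' (e 5) (e 2) = -(μ' (e 2) (e 5)) := hskew' _ _
  have rh45 : μ (e 4) (e 3) = -(μ (e 3) (e 4)) := hskew _ _
  have rh45' : μ' (e 4) (e 3) = -(μ' (e 3) (e 4)) := hskew' _ _
  have rh46 : μ (e 5) (e 3) = -(μ (e 3) (e 5)) := hskew _ _
  have rh46' : μ' (e 5) (e 3) = -(μ' (e 3) (e 5)) := hskew' _ _
  have rh56 : μ (e 5) (e 4) = -(μ (e 4) (e 5)) := hskew _ _
  have rh56' : μ' (e 5) (e 4) = -(μ' (e 4) (e 5)) := hskew' _ _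
  have d0 : μ (e 0) (e 0) = 0 := hd (e 0)
  have d0' : μ' (e 0) (e 0) = 0 := hd' (e 0)
  have d1 : μ (e 1) (e 1) = 0 := hd (e 1)
  have d1' : μ' (e 1) (e 1) = 0 := hd' (e 1)
  have d2 : μ (e 2) (e 2) = 0 := hd (e 2)
  have d2' : μ' (e 2) (e 2) = 0 := hd' (e 2)
  have d3 : μ (e 3) (e 3) = 0 := hd (e 3)
  have d3' : μ' (e 3) (e 3) = 0 := hd' (e 3)
  have d4 : μ (e 4) (e 4) = 0 := hd (e 4)
  have d4' : μ' (e 4) (e 4) = 0 := hd' (e 4)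
  have d5 : μ (e 5) (e 5) = 0 := hd (e 5)
  have d5' : μ' (e 5) (e 5) = 0 := hd' (e 5)
  have hcoord : ∀ i k : Fin 6, e i k = if k = i then 1 else 0 := by
    intro i k; rw [he]; simp [Pi.single_apply]
  have key : ∀ t : ℝ, t ≠ 0 →
      (μ.compr₂ ((f t).symm : (Fin 6 → ℝ) →ₗ[ℝ] (Fin 6 → ℝ))).compl₁₂
        ((f t) : (Fin 6 → ℝ) →ₗ[ℝ] (Fin 6 → ℝ)) ((f t) : (Fin 6 → ℝ) →ₗ[ℝ] (Fin 6 → ℝ))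
        = μ' + t • Rmap α e := by
    intro t ht
    obtain ⟨hf0, hf3, hf4, hf1, hf2, hf5⟩ := hf t ht
    have ht2 : (t:ℝ)^2 ≠ 0 := pow_ne_zero 2 ht
    have hs : ∀ (k : Fin 6) (c : ℝ), c ≠ 0 → f t (e k) = c • e k →
        (f t).symm (e k) = c⁻¹ • e k := by
      intro k c hc h
      calc (f t).symm (e k) = c⁻¹ • (c • (f t).symm (e k)) := by
            rw [smul_smul, inv_mul_cancel₀ hc, one_smul]
        _ = c⁻¹ • (f t).symm (c • e k) := by rw [map_smul]
        _ = c⁻¹ • e k := by rw [← h, (f t).symm_apply_apply]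
    have hs0 := hs 0 _ ht2 hf0
    have hs3 := hs 3 _ ht2 hf3
    have hs4 := hs 4 _ ht2 hf4
    have hs1 := hs 1 _ ht hf1
    have hs2 := hs 2 _ ht hf2
    have hs5 := hs 5 _ ht hf5
    have hb : ∀ k : Fin 6, (Pi.basisFun ℝ (Fin 6)) k = e k := by
      intro k; rw [he]; ext m; simp [Pi.single_apply]
    apply (Pi.basisFun ℝ (Fin 6)).ext; intro i
    apply (Pi.basisFun ℝ (Fin 6)).ext; intro j
    rw [hb i, hb j]
    fin_cases i <;> fin_cases j <;>
      simp only [LinearMap.compl₁₂_apply, LinearMap.compr₂_apply, LinearEquiv.coe_coe,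
        LinearMap.add_apply, LinearMap.smul_apply, Rmap_apply,
        hf0, hf1, hf2, hf3, hf4, hf5, map_smul, map_add, map_neg, map_zero,
        LinearMap.smul_apply, LinearMap.add_apply, LinearMap.neg_apply, LinearMap.zero_apply,
        h23, h16, h26, h36, h46, h56, h12, h13, h14, h15, h24, h25, h34, h35, h45, h23', h26', h36', h12', h13', h14', h15', h16', h24', h25', h34', h35', h45', h46', h56',
        rh12, rh12', rh13, rh13', rh14, rh14', rh15, rh15', rh16, rh16', rh23, rh23', rh24, rh24', rh25, rh25', rh26, rh26', rh34, rh34', rh35, rh35', rh36, rh36', rh45, rh45', rh46, rh46', rh56, rh56', d0, d0', d1, d1', d2, d2', d3, d3', d4, d4', d5, d5',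
        hs0, hs1, hs2, hs3, hs4, hs5, hcoord, reduceIte, Fin.reduceEq, Fin.reduceFinMk, Fin.zero_eta, Fin.mk_one,
        smul_add, smul_neg, smul_zero, smul_smul, Fin.isValue] <;>
      (try (match_scalars <;> (field_simp; try ring)))
  intro x y
  have lim : Tendsto (fun t : ℝ => μ' x y + t • (Rmap α e x y)) (𝓝[≠] (0:ℝ))
      (𝓝 (μ' x y)) := by
    have h1 : Tendsto (fun t : ℝ => μ' x y + t • (Rmap α e x y)) (𝓝 (0:ℝ))
        (𝓝 (μ' x y + (0:ℝ) • (Rmap α e x y))) :=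
      tendsto_const_nhds.add ((continuous_id.smul continuous_const).tendsto 0)
    simpa using h1.mono_left nhdsWithin_le_nhds
  refine Tendsto.congr' ?_ lim
  filter_upwards [self_mem_nhdsWithin] with t ht
  have hk := LinearMap.congr_fun (LinearMap.congr_fun (key t ht) x) y
  simp only [LinearMap.compl₁₂_apply, LinearMap.compr₂_apply, LinearEquiv.coe_coe,
    LinearMap.add_apply, LinearMap.smul_apply] at hk
  exact hk.symm
end

section
/- Let μ be the skew-symmetric bilinear bracket on ℝ¹⁰ = (Fin 10 → ℝ) (standard basis e₁,…,e₁₀) determined by μ(e₁,e₂) = 2e₂, μ(e₁,e₃) = −2e₃, μ(e₂,e₃) = e₁, μ(e₁,e₄) = e₄, μ(e₁,e₅) = −e₅, μ(e₁,e₆) = e₆, μ(e₁,e₇) = −e₇, μ(e₁,e₈) = 2e₈, μ(e₁,e₁₀) = −2e₁₀, μ(e₂,e₅) = e₄, μ(e₂,e₇) = e₆, μ(e₂,e₉) = 2e₈, μ(e₂,e₁₀) = e₉, μ(e₃,e₄) = e₅, μ(e₃,e₆) = e₇, μ(e₃,e₈) = e₉, μ(e₃,e₉) = 2e₁₀, μ(e₄,e₆)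 = 2e₈, μ(e₄,e₇) = e₉, μ(e₅,e₆) = e₉, μ(e₅,e₇) = 2e₁₀, and all other basis brackets zero (the ten-dimensional Lie algebra sl(2,ℝ) ⋉_{D₁⊕2D_{1/2}} r of the paper). Then this Lie algebra is quasi-classical: there exists a bilinear form B on ℝ¹⁰ that is symmetric, non-degenerate, and invariant for μ, i.e. B(μ(x,y), z) = B(x, μ(y,z)) for all x, y, z ∈ ℝ¹⁰. -/
set_option maxHeartbeats 2000000 in


/-- The ten-dimensional Lie algebra `sl(2,ℝ) ⋉_{D₁⊕2D_{1/2}} r` of the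
paper, given on `ℝ¹⁰` by the bracket `μ` specified on the standard basis below, is
quasi-classical: it admits a symmetric, non-degenerate bilinear form invariant for `μ`. -/
theorem tenDimensional_algebra_quasiClassical
    (e : Fin 10 → (Fin 10 → ℝ)) (he : ∀ i, e i = Pi.single i 1)
    (μ : (Fin 10 → ℝ) →ₗ[ℝ] (Fin 10 → ℝ) →ₗ[ℝ] (Fin 10 → ℝ))
    (hskew : ∀ x y, μ x y = - μ y x)
    (h01 : μ (e 0) (e 1) = (2:ℝ) • e 1)
    (h02 : μ (e 0) (e 2) = - ((2:ℝ) • e 2))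
    (h03 : μ (e 0) (e 3) = e 3)
    (h04 : μ (e 0) (e 4) = - e 4)
    (h05 : μ (e 0) (e 5) = e 5)
    (h06 : μ (e 0) (e 6) = - e 6)
    (h07 : μ (e 0) (e 7) = (2:ℝ) • e 7)
    (h08 : μ (e 0) (e 8) = 0)
    (h09 : μ (e 0) (e 9) = - ((2:ℝ) • e 9))
    (h12 : μ (e 1) (e 2) = e 0)
    (h13 : μ (e 1) (e 3) = 0)
    (h14 : μ (e 1) (e 4) = e 3)
    (h15 : μ (e 1) (e 5) = 0)
    (h16 : μ (e 1) (e 6) = e 5)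
    (h17 : μ (e 1) (e 7) = 0)
    (h18 : μ (e 1) (e 8) = (2:ℝ) • e 7)
    (h19 : μ (e 1) (e 9) = e 8)
    (h23 : μ (e 2) (e 3) = e 4)
    (h24 : μ (e 2) (e 4) = 0)
    (h25 : μ (e 2) (e 5) = e 6)
    (h26 : μ (e 2) (e 6) = 0)
    (h27 : μ (e 2) (e 7) = e 8)
    (h28 : μ (e 2) (e 8) = (2:ℝ) • e 9)
    (h29 : μ (e 2) (e 9) = 0)
    (h34 : μ (e 3) (e 4) = 0)
    (h35 : μ (e 3) (e 5) = (2:ℝ) • e 7)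
    (h36 : μ (e 3) (e 6) = e 8)
    (h37 : μ (e 3) (e 7) = 0)
    (h38 : μ (e 3) (e 8) = 0)
    (h39 : μ (e 3) (e 9) = 0)
    (h45 : μ (e 4) (e 5) = e 8)
    (h46 : μ (e 4) (e 6) = (2:ℝ) • e 9)
    (h47 : μ (e 4) (e 7) = 0)
    (h48 : μ (e 4) (e 8) = 0)
    (h49 : μ (e 4) (e 9) = 0)
    (h56 : μ (e 5) (e 6) = 0)
    (h57 : μ (e 5) (e 7) = 0)
    (h58 : μ (e 5) (e 8) = 0)
    (h59 : μ (e 5) (e 9) = 0)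
    (h67 : μ (e 6) (e 7) = 0)
    (h68 : μ (e 6) (e 8) = 0)
    (h69 : μ (e 6) (e 9) = 0)
    (h78 : μ (e 7) (e 8) = 0)
    (h79 : μ (e 7) (e 9) = 0)
    (h89 : μ (e 8) (e 9) = 0) :
    ∃ B : (Fin 10 → ℝ) →ₗ[ℝ] (Fin 10 → ℝ) →ₗ[ℝ] ℝ,
      (∀ x y, B x y = B y x) ∧
      (∀ x, (∀ y, B x y = 0) → x = 0) ∧
      (∀ x y z, B (μ x y) z = B x (μ y z)) := by

  classical
  set F : (Fin 10 → ℝ) → (Fin 10 → ℝ) → ℝ := fun x y =>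
    2 * x 0 * y 8 + x 1 * y 9 - x 2 * y 7 + 2 * x 3 * y 6 - 2 * x 4 * y 5
      - 2 * x 5 * y 4 + 2 * x 6 * y 3 - x 7 * y 2 + 2 * x 8 * y 0 + x 9 * y 1 with hF
  set B : (Fin 10 → ℝ) →ₗ[ℝ] (Fin 10 → ℝ) →ₗ[ℝ] ℝ :=
    LinearMap.mk₂ ℝ F
      (by intro a b y; simp only [hF, Pi.add_apply]; ring)
      (by intro c a y; simp only [hF, Pi.smul_apply, smul_eq_mul]; ring)
      (by intro a b y; simp only [hF, Pi.add_apply]; ring)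
      (by intro c a y; simp only [hF, Pi.smul_apply, smul_eq_mul]; ring) with hB
  have hBapp : ∀ x y, B x y = F x y := fun x y => rfl
  have h10 : μ (e 1) (e 0) = -((2:ℝ) • e 1) := by rw [hskew, h01]
  have h20 : μ (e 2) (e 0) = -(- ((2:ℝ) • e 2)) := by rw [hskew, h02]
  have h30 : μ (e 3) (e 0) = -(e 3) := by rw [hskew, h03]
  have h40 : μ (e 4) (e 0) = -(- e 4) := by rw [hskew, h04]
  have h50 : μ (e 5) (e 0) = -(e 5) := by rw [hskew, h05]
  have h60 : μ (e 6) (e 0) = -(- e 6) := by rw [hskew, h06]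
  have h70 : μ (e 7) (e 0) = -((2:ℝ) • e 7) := by rw [hskew, h07]
  have h80 : μ (e 8) (e 0) = -((0:Fin 10 → ℝ)) := by rw [hskew, h08]
  have h90 : μ (e 9) (e 0) = -(- ((2:ℝ) • e 9)) := by rw [hskew, h09]
  have h21 : μ (e 2) (e 1) = -(e 0) := by rw [hskew, h12]
  have h31 : μ (e 3) (e 1) = -((0:Fin 10 → ℝ)) := by rw [hskew, h13]
  have h41 : μ (e 4) (e 1) = -(e 3) := by rw [hskew, h14]
  have h51 : μ (e 5) (e 1) = -((0:Fin 10 → ℝ)) := by rw [hskew, h15]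
  have h61 : μ (e 6) (e 1) = -(e 5) := by rw [hskew, h16]
  have h71 : μ (e 7) (e 1) = -((0:Fin 10 → ℝ)) := by rw [hskew, h17]
  have h81 : μ (e 8) (e 1) = -((2:ℝ) • e 7) := by rw [hskew, h18]
  have h91 : μ (e 9) (e 1) = -(e 8) := by rw [hskew, h19]
  have h32 : μ (e 3) (e 2) = -(e 4) := by rw [hskew, h23]
  have h42 : μ (e 4) (e 2) = -((0:Fin 10 → ℝ)) := by rw [hskew, h24]
  have h52 : μ (e 5) (e 2) = -(e 6) := by rw [hskew, h25]
  have h62 : μ (e 6) (e 2) = -((0:Fin 10 → ℝ)) := by rw [hskew, h26]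
  have h72 : μ (e 7) (e 2) = -(e 8) := by rw [hskew, h27]
  have h82 : μ (e 8) (e 2) = -((2:ℝ) • e 9) := by rw [hskew, h28]
  have h92 : μ (e 9) (e 2) = -((0:Fin 10 → ℝ)) := by rw [hskew, h29]
  have h43 : μ (e 4) (e 3) = -((0:Fin 10 → ℝ)) := by rw [hskew, h34]
  have h53 : μ (e 5) (e 3) = -((2:ℝ) • e 7) := by rw [hskew, h35]
  have h63 : μ (e 6) (e 3) = -(e 8) := by rw [hskew, h36]
  have h73 : μ (e 7) (e 3) = -((0:Fin 10 → ℝ)) := by rw [hskew, h37]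
  have h83 : μ (e 8) (e 3) = -((0:Fin 10 → ℝ)) := by rw [hskew, h38]
  have h93 : μ (e 9) (e 3) = -((0:Fin 10 → ℝ)) := by rw [hskew, h39]
  have h54 : μ (e 5) (e 4) = -(e 8) := by rw [hskew, h45]
  have h64 : μ (e 6) (e 4) = -((2:ℝ) • e 9) := by rw [hskew, h46]
  have h74 : μ (e 7) (e 4) = -((0:Fin 10 → ℝ)) := by rw [hskew, h47]
  have h84 : μ (e 8) (e 4) = -((0:Fin 10 → ℝ)) := by rw [hskew, h48]
  have h94 : μ (e 9) (e 4) = -((0:Fin 10 → ℝ)) := by rw [hskew, h49]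
  have h65 : μ (e 6) (e 5) = -((0:Fin 10 → ℝ)) := by rw [hskew, h56]
  have h75 : μ (e 7) (e 5) = -((0:Fin 10 → ℝ)) := by rw [hskew, h57]
  have h85 : μ (e 8) (e 5) = -((0:Fin 10 → ℝ)) := by rw [hskew, h58]
  have h95 : μ (e 9) (e 5) = -((0:Fin 10 → ℝ)) := by rw [hskew, h59]
  have h76 : μ (e 7) (e 6) = -((0:Fin 10 → ℝ)) := by rw [hskew, h67]
  have h86 : μ (e 8) (e 6) = -((0:Fin 10 → ℝ)) := by rw [hskew, h68]
  have h96 : μ (e 9) (e 6) = -((0:Fin 10 → ℝ)) := by rw [hskew, h69]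
  have h87 : μ (e 8) (e 7) = -((0:Fin 10 → ℝ)) := by rw [hskew, h78]
  have h97 : μ (e 9) (e 7) = -((0:Fin 10 → ℝ)) := by rw [hskew, h79]
  have h98 : μ (e 9) (e 8) = -((0:Fin 10 → ℝ)) := by rw [hskew, h89]
  have hdiag : ∀ i, μ (e i) (e i) = 0 := by
    intro i
    have h := hskew (e i) (e i)
    have h2 : (2:ℝ) • μ (e i) (e i) = 0 := by
      rw [two_smul]; nth_rewrite 2 [h]; simp
    rcases smul_eq_zero.mp h2 with h' | h'
    · norm_num at h'
    · exact h'
  have hx : ∀ v : Fin 10 → ℝ, v = v 0 • e 0 + v 1 • e 1 + v 2 • e 2 + v 3 • e 3 + v 4 • e 4 + v 5 • e 5 + v 6 • e 6 + v 7 • e 7 + v 8 • e 8 + v 9 • e 9 := by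
    intro v; funext t
    fin_cases t <;>
      simp [he, Pi.single_apply, Fin.reduceEq, reduceIte]
  have hμ : ∀ v w : Fin 10 → ℝ, μ v w =
      (v 1 * w 2 - v 2 * w 1) • e 0 + (2*(v 0 * w 1 - v 1 * w 0)) • e 1 + (-2*(v 0 * w 2 - v 2 * w 0)) • e 2 + ((v 0 * w 3 - v 3 * w 0) + (v 1 * w 4 - v 4 * w 1)) • e 3 + (-(v 0 * w 4 - v 4 * w 0) + (v 2 * w 3 - v 3 * w 2)) • e 4 + ((v 0 * w 5 - v 5 * w 0) + (v 1 * w 6 - v 6 * w 1)) • e 5 + (-(v 0 * w 6 - v 6 * w 0) + (v 2 * w 5 - v 5 * w 2)) • e 6 + (2*(v 0 * w 7 - v 7 * w 0) + 2*(v 1 * w 8 - v 8 * w 1) + 2*(v 3 * w 5 - v 5 * w 3)) • e 7 + ((v 1 * w 9 - v 9 * w 1) + (v 2 * w 7 - v 7 * w 2) + (v 3 * w 6 - v 6 * w 3) + (v 4 * w 5 - v 5 * w 4)) • e 8 + (-2*(v 0 * w 9 - v 9 * w 0) + 2*(v 2 * w 8 - v 8 * w 2) + 2*(v 4 * w 6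 - v 6 * w 4)) • e 9 := by
    intro v w
    conv_lhs => rw [hx v, hx w]
    simp only [map_add, map_smul, LinearMap.add_apply, LinearMap.smul_apply,
      h01, h02, h03, h04, h05, h06, h07, h08, h09, h12, h13, h14, h15, h16, h17, h18, h19, h23, h24, h25, h26, h27, h28, h29, h34, h35, h36, h37, h38, h39, h45, h46, h47, h48, h49, h56, h57, h58, h59, h67, h68, h69, h78, h79, h89, h10, h20, h30, h40, h50, h60, h70, h80, h90, h21, h31, h41, h51, h61, h71, h81, h91, h32, h42, h52, h62, h72, h82, h92, h43, h53, h63, h73, h83, h93, h54, h64, h74, h84, h94, h65, h75, h85, h95, h76, h86, h96, h87, h97, h98, hdiag]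
    funext t
    fin_cases t <;>
      simp [he, Pi.single_apply, Fin.reduceEq, reduceIte, smul_eq_mul,
        Pi.add_apply, Pi.smul_apply, Pi.neg_apply, Pi.zero_apply, mul_ite] <;>
      ring
  refine ⟨B, ?_, ?_, ?_⟩
  · intro x y
    simp only [hBapp, hF]; ring
  · intro x hx'
    have h0 := hx' (e 8); have h1 := hx' (e 9); have h2 := hx' (e 7)
    have h3' := hx' (e 6); have h4 := hx' (e 5); have h5 := hx' (e 4)
    have h6 := hx' (e 3); have h7 := hx' (e 2); have h8 := hx' (e 0)
    have h9 := hx' (e 1)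
    simp only [hBapp, hF, he, Pi.single_apply] at h0 h1 h2 h3' h4 h5 h6 h7 h8 h9
    simp only [Fin.reduceEq, reduceIte, zero_add, add_zero, sub_zero, zero_sub,
      neg_eq_zero] at h0 h1 h2 h3' h4 h5 h6 h7 h8 h9
    funext k
    fin_cases k
    · show x 0 = 0; linarith
    · show x 1 = 0; linarith
    · show x 2 = 0; linarith
    · show x 3 = 0; linarith
    · show x 4 = 0; linarith
    · show x 5 = 0; linarith
    · show x 6 = 0; linarith
    · show x 7 = 0; linarith
    · show x 8 = 0; linarith
    · show x 9 = 0; linarith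
  · intro x y z
    rw [hμ x y, hμ y z]
    simp only [hBapp, hF, he, Pi.add_apply, Pi.smul_apply, Pi.neg_apply, smul_eq_mul,
      Pi.single_apply, Fin.reduceEq, reduceIte, mul_zero, zero_mul, mul_one, one_mul,
      add_zero, zero_add]
    ring
end
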